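/- arXiv:0811.0309 — 14 statements merged into one kernel-verified Lean document; each statement's English description precedes it below -/
import Mathlib

section
/- Let L be a bounded distributive lattice and let a_1 ≤ a_2 ≤ ... ≤ a_{n+1} and b_1 ≥ b_2 ≥ ... ≥ b_{n+1} be elements of L with a_{n+1} ≥ b_{n+1}. Then the join over i ∈ [n+1] of (a_i ∧ b_i) equals the median of the 2n+1 elements a_1, ..., a_n, b_1, ..., b_{n+1}, where the median of 2n+1 elements is the join over all (n+1)-element subsets I of the meet of the elements indexed by I. -/
/-!
Both sides are compared term by term. Each `a i ⊓ b i` lies below the meet of the `n + 1`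
consecutive arguments `a i, …, a (n-1), b 0, …, b i` of the median, by monotonicity. Conversely,
`n + 1` of the `2n + 1` positions have smallest and largest elements `p`, `q` with `q - p ≥ n`:
if `p < n` the meet lies below `a p ⊓ b (q - n) ≤ a p ⊓ b p`, and otherwise the subset is
`b 0, …, b n` and its meet lies below `b n ≤ a n`.
-/

section

open Finset

theorem Finset.subset_Icc_min'_max' {α : Type*} [LinearOrder α] [LocallyFiniteOrder α]
    (s : Finset α) (hs : s.Nonempty) : s ⊆ Icc (s.min' hs) (s.max' hs) :=
  fun _ hx => mem_Icc.2 ⟨min'_le s _ hx, le_max' s _ hx⟩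

theorem Fin.card_le_max'_add_one_sub_min' {m : ℕ} (s : Finset (Fin m)) (hs : s.Nonempty) :
    #s ≤ (s.max' hs : ℕ) + 1 - s.min' hs :=
  (card_le_card (s.subset_Icc_min'_max' hs)).trans_eq (Fin.card_Icc _ _)

variable {L : Type*} {n : ℕ}

def initAppend (a b : Fin (n + 1) → L) (j : Fin (2 * n + 1)) : L :=
  if h : (j : ℕ) < n then a ⟨j, Nat.lt_succ_of_lt h⟩ else b ⟨(j : ℕ) - n, by omega⟩

variable {a b : Fin (n + 1) → L} {j : Fin (2 * n + 1)}

theorem initAppend_of_lt (h : (j : ℕ) < n) : initAppend a b j = a ⟨j, Nat.lt_succ_of_lt h⟩ :=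
  dif_pos h

theorem initAppend_of_le (h : n ≤ (j : ℕ)) :
    initAppend a b j = b ⟨(j : ℕ) - n, by omega⟩ := dif_neg (by omega)

variable [Lattice L]

theorem inf_le_initAppend (ha : Monotone a) (hb : Antitone b) {i : Fin (n + 1)}
    (hij : (i : ℕ) ≤ j) (hji : (j : ℕ) ≤ n + i) : a i ⊓ b i ≤ initAppend a b j := by
  rcases lt_or_ge (j : ℕ) n with h | h
  · rw [initAppend_of_lt h]
    exact inf_le_left.trans (ha (Fin.mk_le_mk.2 hij))
  · rw [initAppend_of_le h]
    exact inf_le_right.trans (hb (Fin.mk_le_mk.2 (by omega)))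

variable [OrderTop L]

theorem exists_inf_initAppend_le (hb : Antitone b)
    (hab : b (Fin.last n) ≤ a (Fin.last n)) {s : Finset (Fin (2 * n + 1))} (hs : n + 1 ≤ #s) :
    ∃ i, s.inf (initAppend a b) ≤ a i ⊓ b i := by
  have hne : s.Nonempty := card_pos.1 (by omega)
  set p := s.min' hne
  set q := s.max' hne
  have hspread : (p : ℕ) + n ≤ q := by
    have := Fin.card_le_max'_add_one_sub_min' s hne
    omega
  have hq : s.inf (initAppend a b) ≤ b ⟨(q : ℕ) - n, by omega⟩ :=
    (inf_le (max'_mem s hne)).trans_eq (initAppend_of_le (by omega))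
  rcases lt_or_ge (p : ℕ) n with hp | hp
  · refine ⟨⟨p, by omega⟩, le_inf ?_ (hq.trans (hb (Fin.mk_le_mk.2 (by omega))))⟩
    exact (inf_le (min'_mem s hne)).trans_eq (initAppend_of_lt hp)
  · have hlast : (⟨(q : ℕ) - n, by omega⟩ : Fin (n + 1)) = Fin.last n := by
      ext
      have := q.isLt
      simp only [Fin.val_last]
      omega
    rw [hlast] at hq
    exact ⟨Fin.last n, le_inf (hq.trans hab) hq⟩

end

/-- Lemma on standard simplices (Dubois–Prade): the join of a_i ∧ b_i
equals the median of the 2n+1 elements a_1,...,a_n,b_1,...,b_{n+1}. -/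
theorem stmt0 {L : Type*} [DistribLattice L] [BoundedOrder L] {n : ℕ}
    (a b : Fin (n + 1) → L) (ha : Monotone a) (hb : Antitone b)
    (hab : b (Fin.last n) ≤ a (Fin.last n)) :
    (Finset.univ.sup fun i => a i ⊓ b i) =
      ((Finset.univ : Finset (Fin (2 * n + 1))).powerset.filter
        fun I => I.card = n + 1).sup
        (fun I => I.inf fun j =>
          if h : (j : ℕ) < n then a ⟨j, by omega⟩
          else b ⟨(j : ℕ) - n, by have := j.isLt; omega⟩) := by
  change _ = (Finset.univ.powerset.filter fun I : Finset (Fin (2 * n + 1)) => I.card = n + 1).sup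
    fun I => I.inf (initAppend a b)
  apply le_antisymm
  · refine Finset.sup_le fun i _ => ?_
    let window : Finset (Fin (2 * n + 1)) := Finset.Icc ⟨i, by omega⟩ ⟨n + i, by omega⟩
    have hwindow : window ∈ (Finset.univ.powerset.filter fun I => I.card = n + 1) := by
      simp only [Finset.mem_filter, Finset.mem_powerset, Finset.subset_univ, true_and, window,
        Fin.card_Icc]
      omega
    refine Finset.le_sup_of_le hwindow (Finset.le_inf fun j hj => ?_)
    obtain ⟨hij, hji⟩ := Finset.mem_Icc.1 hj
    exact inf_le_initAppend ha hb hij hji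
  · refine Finset.sup_le fun I hI => ?_
    obtain ⟨i, hi⟩ := exists_inf_initAppend_le hb hab (Finset.mem_filter.1 hI).2.ge
    exact hi.trans (Finset.le_sup (f := fun i => a i ⊓ b i) (Finset.mem_univ i))
end

section
/- Let L be a bounded chain and f : L^n → L a function that is nondecreasing, weakly R̄_f-min homogeneous, and weakly R̄_f-max homogeneous. Then f is a lattice polynomial function, i.e., f(x) = ⋁_{I ⊆ [n]} (f(e_I) ∧ ⟨⋀_{i∈I} x_i⟩_f) for all x ∈ L^n, where e_I ∈ {0,1}^n is the characteristic vector of I and ⟨c⟩_f = med(f(0,...,0), c, f(1,...,1)). -/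
/-- Ternary median. -/
def med3 {L : Type*} [Lattice L] (a b c : L) : L := (a ⊔ b) ⊓ (b ⊔ c) ⊓ (c ⊔ a)

/-- The set L_n^{(0,2)} of vectors of the form med(c, e, d) with e a Boolean vector. -/
def L02 (L : Type*) [Lattice L] [BoundedOrder L] (n : ℕ) : Set (Fin n → L) :=
  {x | ∃ (e : Fin n → L) (c d : L), (∀ i, e i = ⊥ ∨ e i = ⊤) ∧ ∀ i, x i = med3 c (e i) d}

lemma med3_eq {L : Type*} [Lattice L] {a c : L} (b : L) (h : a ≤ c) :
    med3 a b c = (a ⊔ b) ⊓ c := by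
  have h1 : (b ⊔ c) ⊓ c = c := inf_eq_right.mpr le_sup_right
  unfold med3
  rw [sup_eq_left.mpr h, inf_assoc, h1]

/-- a nondecreasing, weakly R̄_f-min homogeneous and weakly R̄_f-max
homogeneous function on a bounded chain is a lattice polynomial function, with the
explicit DNF representation. -/
theorem stmt1 {L : Type*} [LinearOrder L] [BoundedOrder L] {n : ℕ}
    (f : (Fin n → L) → L) (hmono : Monotone f)
    (hmin : ∀ x ∈ L02 L n, ∀ c ∈ Set.Icc (f fun _ => (⊥ : L)) (f fun _ => ⊤),
      f (fun i => x i ⊓ c) = f x ⊓ c)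
    (hmax : ∀ x ∈ L02 L n, ∀ c ∈ Set.Icc (f fun _ => (⊥ : L)) (f fun _ => ⊤),
      f (fun i => x i ⊔ c) = f x ⊔ c) :
    ∀ x, f x = (Finset.univ : Finset (Fin n)).powerset.sup
      (fun I => f (fun i => if i ∈ I then ⊤ else ⊥) ⊓
        med3 (f fun _ => ⊥) (I.inf x) (f fun _ => ⊤)) := by
  have hbot : ∀ y : Fin n → L, f (fun _ => ⊥) ≤ f y := fun y => hmono (fun i => bot_le)
  have htop : ∀ y : Fin n → L, f y ≤ f (fun _ => ⊤) := fun y => hmono (fun i => le_top)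
  have h01 : f (fun _ => (⊥ : L)) ≤ f (fun _ => ⊤) := hbot _
  have heL02 : ∀ I : Finset (Fin n),
      (fun i => if i ∈ I then (⊤ : L) else ⊥) ∈ L02 L n := by
    intro I
    refine ⟨fun i => if i ∈ I then (⊤ : L) else ⊥, ⊥, ⊤, fun i => ?_, fun i => ?_⟩
    · by_cases h : i ∈ I <;> simp [h]
    · rw [med3_eq _ bot_le]; simp
  intro x
  apply le_antisymm
  · -- f x ≤ sup
    set v := f x with hv
    set I : Finset (Fin n) := Finset.univ.filter (fun i => v ≤ x i) with hI
    have hIv : v ≤ f (fun i => if i ∈ I then ⊤ else ⊥) := by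
      rcases le_or_gt v (f (fun _ => ⊥)) with hc | hc
      · exact hc.trans (hbot _)
      · set m : L := Finset.univ.sup (fun i => if v ≤ x i then ⊥ else x i) with hm
        have hmv : m < v := by
          refine (Finset.sup_lt_iff (bot_le.trans_lt hc)).mpr ?_
          intro i _
          by_cases h : v ≤ x i
          · simpa [h] using bot_le.trans_lt hc
          · simpa [h] using lt_of_not_ge h
        set m' : L := ((f (fun _ => ⊥)) ⊔ m) ⊓ (f (fun _ => ⊤)) with hm'
        have hm'v : m' < v := lt_of_le_of_lt inf_le_left (sup_lt_iff.mpr ⟨hc, hmv⟩)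
        have hmm' : m ≤ m' := le_inf le_sup_right (le_trans hmv.le (htop x))
        have hmem : m' ∈ Set.Icc (f (fun _ => (⊥ : L))) (f (fun _ => ⊤)) :=
          ⟨le_inf (le_sup_left.trans le_rfl) h01 |>.trans_eq rfl, inf_le_right⟩
        have key := hmax _ (heL02 I) m' hmem
        have hxle : x ≤ fun i => (if i ∈ I then (⊤ : L) else ⊥) ⊔ m' := by
          intro i
          by_cases h : i ∈ I
          · simp [h]
          · simp only [h, if_false, bot_sup_eq]
            have hni : ¬ v ≤ x i := by simpa [hI] using h
            have hxm : x i ≤ m := by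
              calc x i = (if v ≤ x i then ⊥ else x i) := by simp [hni]
                _ ≤ m := by rw [hm]; exact Finset.le_sup (f := fun i => if v ≤ x i then (⊥ : L) else x i) (Finset.mem_univ i)
            exact hxm.trans hmm'
        have hkey2 : v ≤ f (fun i => if i ∈ I then ⊤ else ⊥) ⊔ m' :=
          le_trans (hmono hxle) (le_of_eq key)
        by_contra hcon
        push_neg at hcon
        exact absurd hkey2 (not_le.mpr (sup_lt_iff.mpr ⟨hcon, hm'v⟩))
    have hcv : v ≤ med3 (f (fun _ => ⊥)) (I.inf x) (f (fun _ => ⊤)) := by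
      rw [med3_eq _ h01]
      refine le_inf (le_trans ?_ le_sup_right) (htop x)
      exact Finset.le_inf fun i hi => by simpa [hI] using (Finset.mem_filter.mp hi).2
    exact le_trans (le_inf hIv hcv) (Finset.le_sup
      (f := fun I => f (fun i => if i ∈ I then ⊤ else ⊥) ⊓
        med3 (f fun _ => ⊥) (I.inf x) (f fun _ => ⊤))
      (Finset.mem_powerset.mpr (Finset.subset_univ I)))
  · refine Finset.sup_le fun I _ => ?_
    rcases le_total (f (fun _ => (⊥ : L))) (I.inf x) with hc | hc
    · have hmed : med3 (f (fun _ => (⊥ : L))) (I.inf x) (f (fun _ => ⊤))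
          = I.inf x ⊓ (f (fun _ => ⊤)) := by
        rw [med3_eq _ h01, sup_eq_right.mpr hc]
      rw [hmed]
      have hmem : I.inf x ⊓ (f (fun _ => ⊤)) ∈
          Set.Icc (f (fun _ => (⊥ : L))) (f (fun _ => ⊤)) :=
        ⟨le_inf hc h01, inf_le_right⟩
      have key := hmin _ (heL02 I) _ hmem
      refine le_trans (le_of_eq key.symm) (hmono ?_)
      intro i
      by_cases h : i ∈ I
      · simp only [h, if_true, top_inf_eq]
        exact le_trans inf_le_left (Finset.inf_le h)
      · simp [h]
    · have hmed : med3 (f (fun _ => (⊥ : L))) (I.inf x) (f (fun _ => ⊤))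
          = f (fun _ => (⊥ : L)) := by
        rw [med3_eq _ h01, sup_eq_left.mpr hc, inf_eq_left.mpr h01]
      rw [hmed]
      exact le_trans inf_le_right (hbot x)
end

section
/- Let L be a bounded lattice and f : L^n → L nondecreasing. If f is weakly R̄_f-min homogeneous or weakly R̄_f-max homogeneous, then f is R̄_f-idempotent: f(c,...,c) = c for every c in the interval [f(0,...,0), f(1,...,1)]. -/
/-!
Apply min homogeneity to the constant vector `⊤`: `f (c, …, c) = f (⊤, …, ⊤) ⊓ c = c` because
`c ≤ f (⊤, …, ⊤)`. Dually, max homogeneity at the constant vector `⊥` gives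
`f (c, …, c) = f (⊥, …, ⊥) ⊔ c = c`.
-/

theorem med3_self_left_right {L : Type*} [Lattice L] (a b : L) : med3 a b a = a := by
  simp [med3]

theorem const_mem_L02 {L : Type*} [Lattice L] [BoundedOrder L] (n : ℕ) (a : L) :
    (fun _ : Fin n => a) ∈ L02 L n :=
  ⟨fun _ => ⊥, a, a, fun _ => Or.inl rfl, fun _ => (med3_self_left_right a ⊥).symm⟩

theorem apply_const_eq_of_inf_homogeneous {L : Type*} [Lattice L] [BoundedOrder L] {n : ℕ}
    (f : (Fin n → L) → L)
    (h : ∀ x ∈ L02 L n, ∀ c ∈ Set.Icc (f fun _ => (⊥ : L)) (f fun _ => ⊤),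
      f (fun i => x i ⊓ c) = f x ⊓ c)
    {c : L} (hc : c ∈ Set.Icc (f fun _ => (⊥ : L)) (f fun _ => ⊤)) :
    f (fun _ => c) = c := by
  simpa [inf_eq_right.mpr hc.2] using h _ (const_mem_L02 n ⊤) c hc

theorem apply_const_eq_of_sup_homogeneous {L : Type*} [Lattice L] [BoundedOrder L] {n : ℕ}
    (f : (Fin n → L) → L)
    (h : ∀ x ∈ L02 L n, ∀ c ∈ Set.Icc (f fun _ => (⊥ : L)) (f fun _ => ⊤),
      f (fun i => x i ⊔ c) = f x ⊔ c)
    {c : L} (hc : c ∈ Set.Icc (f fun _ => (⊥ : L)) (f fun _ => ⊤)) :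
    f (fun _ => c) = c := by
  simpa [sup_eq_right.mpr hc.1] using h _ (const_mem_L02 n ⊥) c hc

theorem stmt3_general {L : Type*} [Lattice L] [BoundedOrder L] {n : ℕ}
    (f : (Fin n → L) → L)
    (h : (∀ x ∈ L02 L n, ∀ c ∈ Set.Icc (f fun _ => (⊥ : L)) (f fun _ => ⊤),
            f (fun i => x i ⊓ c) = f x ⊓ c) ∨
         (∀ x ∈ L02 L n, ∀ c ∈ Set.Icc (f fun _ => (⊥ : L)) (f fun _ => ⊤),
            f (fun i => x i ⊔ c) = f x ⊔ c)) :
    ∀ c ∈ Set.Icc (f fun _ => (⊥ : L)) (f fun _ => ⊤), f (fun _ => c) = c := fun _ hc =>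
  h.elim (apply_const_eq_of_inf_homogeneous f · hc) (apply_const_eq_of_sup_homogeneous f · hc)

/-- a nondecreasing function which is weakly R̄_f-min homogeneous
or weakly R̄_f-max homogeneous is R̄_f-idempotent. -/
theorem stmt3 {L : Type*} [Lattice L] [BoundedOrder L] {n : ℕ}
    (f : (Fin n → L) → L) (hmono : Monotone f)
    (h : (∀ x ∈ L02 L n, ∀ c ∈ Set.Icc (f fun _ => (⊥ : L)) (f fun _ => ⊤),
            f (fun i => x i ⊓ c) = f x ⊓ c) ∨
         (∀ x ∈ L02 L n, ∀ c ∈ Set.Icc (f fun _ => (⊥ : L)) (f fun _ => ⊤),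
            f (fun i => x i ⊔ c) = f x ⊔ c)) :
    ∀ c ∈ Set.Icc (f fun _ => (⊥ : L)) (f fun _ => ⊤), f (fun _ => c) = c :=
  stmt3_general f h
end

section
/- Let L be a bounded chain and S a nonempty subset of L. If f : L^n → L is nondecreasing, S-idempotent, and weakly horizontally S-minitive, then f is weakly S-min homogeneous. -/
lemma med3_bot {L : Type*} [Lattice L] [BoundedOrder L] (a b : L) : med3 a ⊥ b = a ⊓ b := by
  simp [med3, inf_eq_left.mpr (inf_le_right.trans (le_sup_left (b := a)))]

lemma med3_top {L : Type*} [Lattice L] [BoundedOrder L] (a b : L) : med3 a ⊤ b = b ⊔ a := by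
  simp [med3]

/-- on a bounded chain, a nondecreasing, S-idempotent, weakly
horizontally S-minitive function is weakly S-min homogeneous. -/
theorem stmt4 {L : Type*} [LinearOrder L] [BoundedOrder L] {n : ℕ}
    (S : Set L) (hS : S.Nonempty) (f : (Fin n → L) → L) (hmono : Monotone f)
    (hid : ∀ c ∈ S, f (fun _ => c) = c)
    (hhormin : ∀ x ∈ L02 L n, ∀ c ∈ S,
      f x = f (fun i => x i ⊔ c) ⊓ f (fun i => if c ≤ x i then ⊤ else x i)) :
    ∀ x ∈ L02 L n, ∀ c ∈ S, f (fun i => x i ⊓ c) = f x ⊓ c := by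
  intro x hx c hc
  -- y := x ⊓ c is in L02
  have hy : (fun i => x i ⊓ c) ∈ L02 L n := by
    obtain ⟨e, c', d, he, hxi⟩ := hx
    refine ⟨e, c' ⊓ c, d ⊓ c, he, fun i => ?_⟩
    rcases he i with h | h <;> simp only [h, hxi i] <;>
      [rw [med3_bot, med3_bot]; rw [med3_top, med3_top]]
    · exact inf_inf_distrib_right c' d c
    · exact inf_sup_right d c' c |>.symm ▸ (inf_sup_right d c' c)
  have key := hhormin _ hy c hc
  have h1 : (fun i => (x i ⊓ c) ⊔ c) = (fun _ : Fin n => c) := by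
    funext i; exact sup_eq_right.mpr inf_le_right
  have h2 : (fun i => if c ≤ x i ⊓ c then (⊤ : L) else x i ⊓ c)
      = (fun i => if c ≤ x i then (⊤ : L) else x i) := by
    funext i
    by_cases h : c ≤ x i
    · simp [h, le_inf_iff]
    · simp [h, le_inf_iff, inf_eq_left.mpr (le_of_not_ge h)]
  rw [h1, h2, hid c hc] at key
  have key2 := hhormin x hx c hc
  have hcx : c ≤ f (fun i => x i ⊔ c) := by
    have := hmono (a := fun _ => c) (b := fun i => x i ⊔ c) fun i => le_sup_right
    rwa [hid c hc] at this
  rw [key, key2, inf_right_comm, inf_eq_right.mpr hcx]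
end

section
/- Let L be a bounded chain and f : L^n → L nondecreasing. If f is weakly median decomposable, then f is R̄_f-idempotent: f(c,...,c) = c for all c ∈ [f(0,...,0), f(1,...,1)]. -/
/-- The set L_n^{(p,q)} = {x ∈ L^n : |{x_1,...,x_n} ∩ {0,1}| ≥ p and |{x_1,...,x_n}| ≤ q}. -/
def Lpq (L : Type*) [LinearOrder L] [BoundedOrder L] (n p q : ℕ) : Set (Fin n → L) :=
  {x | p ≤ ((Finset.univ.image x) ∩ ({⊥, ⊤} : Finset L)).card ∧
      (Finset.univ.image x).card ≤ q}

lemma med3_of_le {L : Type*} [LinearOrder L] {a b x : L} (hab : a ≤ b) :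
    med3 a x b = (a ⊔ x) ⊓ b := by
  unfold med3
  rw [sup_eq_left.mpr hab, inf_assoc,
    show (x ⊔ b) ⊓ b = b from inf_eq_right.mpr le_sup_right]

lemma sup_med3 {L : Type*} [LinearOrder L] {a b c : L} (hab : a ≤ b) :
    c ⊔ med3 a c b = c ⊔ a := by
  rw [med3_of_le hab, sup_inf_left, sup_comm a c, ← sup_assoc, sup_idem,
    inf_eq_left.mpr (sup_le_sup_left hab c)]

lemma inf_med3 {L : Type*} [LinearOrder L] {a b c : L} (hab : a ≤ b) :
    c ⊓ med3 a c b = c ⊓ b := by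
  rw [med3_of_le hab, ← inf_assoc,
    show c ⊓ (a ⊔ c) = c from inf_eq_left.mpr le_sup_right]

/-- a nondecreasing weakly median decomposable function on a
bounded chain is R̄_f-idempotent. -/
theorem stmt6 {L : Type*} [LinearOrder L] [BoundedOrder L] {n : ℕ}
    (f : (Fin n → L) → L) (hmono : Monotone f)
    (hmed : ∀ x ∈ Lpq L n 0 2 ∪ Lpq L n 1 3, ∀ k : Fin n,
      f x = med3 (f (Function.update x k ⊥)) (x k) (f (Function.update x k ⊤))) :
    ∀ c ∈ Set.Icc (f fun _ => (⊥ : L)) (f fun _ => ⊤), f (fun _ => c) = c := by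
  intro c hc
  obtain ⟨hc0, hc1⟩ := hc
  -- the two chains of vectors
  set u : ℕ → (Fin n → L) := fun k i => if (i : ℕ) < k then c else ⊥ with hu
  set v : ℕ → (Fin n → L) := fun k i => if (i : ℕ) < k then c else ⊤ with hv
  have hu0 : u 0 = fun _ => ⊥ := by funext i; simp [hu]
  have hun : u n = fun _ => c := by funext i; simp [hu, i.isLt]
  have hv0 : v 0 = fun _ => ⊤ := by funext i; simp [hv]
  have hvn : v n = fun _ => c := by funext i; simp [hv, i.isLt]
  -- membership
  have hmem : ∀ (a : L) (x : Fin n → L), (∀ i, x i = c ∨ x i = a) →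
      x ∈ Lpq L n 0 2 ∪ Lpq L n 1 3 := by
    intro a x hx
    left
    refine ⟨Nat.zero_le _, ?_⟩
    have hsub : Finset.univ.image x ⊆ {c, a} := by
      intro y hy
      simp only [Finset.mem_image] at hy
      obtain ⟨i, -, rfl⟩ := hy
      rcases hx i with h | h <;> simp [h]
    exact (Finset.card_le_card hsub).trans ((Finset.card_insert_le _ _).trans (by simp))
  have humem : ∀ k, u k ∈ Lpq L n 0 2 ∪ Lpq L n 1 3 := by
    intro k
    refine hmem ⊥ (u k) fun i => ?_
    by_cases h : (i : ℕ) < k <;> simp [hu, h]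
  have hvmem : ∀ k, v k ∈ Lpq L n 0 2 ∪ Lpq L n 1 3 := by
    intro k
    refine hmem ⊤ (v k) fun i => ?_
    by_cases h : (i : ℕ) < k <;> simp [hv, h]
  -- update facts
  have huupd : ∀ k (hk : k < n), Function.update (u (k+1)) ⟨k, hk⟩ ⊥ = u k := by
    intro k hk
    funext i
    rcases eq_or_ne i ⟨k, hk⟩ with rfl | h
    · simp [hu]
    · have hik : (i : ℕ) ≠ k := fun hik => h (Fin.ext hik)
      rw [Function.update_of_ne h]
      simp only [hu]
      by_cases h2 : (i : ℕ) < k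
      · rw [if_pos h2, if_pos (by omega)]
      · rw [if_neg h2, if_neg (by omega)]
  have hvupd : ∀ k (hk : k < n), Function.update (v (k+1)) ⟨k, hk⟩ ⊤ = v k := by
    intro k hk
    funext i
    rcases eq_or_ne i ⟨k, hk⟩ with rfl | h
    · simp [hv]
    · have hik : (i : ℕ) ≠ k := fun hik => h (Fin.ext hik)
      rw [Function.update_of_ne h]
      simp only [hv]
      by_cases h2 : (i : ℕ) < k
      · rw [if_pos h2, if_pos (by omega)]
      · rw [if_neg h2, if_neg (by omega)]
  have hukk : ∀ k (hk : k < n), u (k+1) ⟨k, hk⟩ = c := by intro k hk; simp [hu]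
  have hvkk : ∀ k (hk : k < n), v (k+1) ⟨k, hk⟩ = c := by intro k hk; simp [hv]
  -- monotonicity facts
  have huLe : ∀ k (hk : k < n), u k ≤ Function.update (u (k+1)) ⟨k, hk⟩ ⊤ := by
    intro k hk i
    rcases eq_or_ne i ⟨k, hk⟩ with rfl | h
    · simp
    · have hik : (i : ℕ) ≠ k := fun hik => h (Fin.ext hik)
      rw [Function.update_of_ne h]
      simp only [hu]
      by_cases h2 : (i : ℕ) < k
      · rw [if_pos h2, if_pos (by omega)]
      · rw [if_neg h2]; exact bot_le
  have hvLe : ∀ k (hk : k < n), Function.update (v (k+1)) ⟨k, hk⟩ ⊥ ≤ v k := by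
    intro k hk i
    rcases eq_or_ne i ⟨k, hk⟩ with rfl | h
    · simp
    · have hik : (i : ℕ) ≠ k := fun hik => h (Fin.ext hik)
      rw [Function.update_of_ne h]
      simp only [hv]
      by_cases h2 : (i : ℕ) < k
      · rw [if_pos h2, if_pos (by omega)]
      · rw [if_neg h2]; exact le_top
  -- the two inductions
  have hD : ∀ k, k ≤ n → c ⊔ f (u k) = c ⊔ f (u 0) := by
    intro k
    induction k with
    | zero => intro _; rfl
    | succ k ih =>
      intro hk1
      have hk : k < n := hk1
      rw [hmed (u (k+1)) (humem (k+1)) ⟨k, hk⟩, huupd k hk, hukk k hk,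
        sup_med3 (hmono (huLe k hk)), ih hk.le]
  have hE : ∀ k, k ≤ n → c ⊓ f (v k) = c ⊓ f (v 0) := by
    intro k
    induction k with
    | zero => intro _; rfl
    | succ k ih =>
      intro hk1
      have hk : k < n := hk1
      rw [hmed (v (k+1)) (hvmem (k+1)) ⟨k, hk⟩, hvupd k hk, hvkk k hk,
        inf_med3 (hmono (hvLe k hk)), ih hk.le]
  have h1 : c ⊔ f (fun _ => c) = c := by
    have := hD n le_rfl
    rw [hun, hu0] at this
    rw [this, sup_eq_left.mpr hc0]
  have h2 : c ⊓ f (fun _ => c) = c := by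
    have := hE n le_rfl
    rw [hvn, hv0] at this
    rw [this, inf_eq_left.mpr hc1]
  exact le_antisymm (sup_eq_left.mp h1) (inf_eq_left.mp h2)
end

section
/- Let L be a bounded chain and f : L^n → L a nondecreasing function. Then f is weakly median decomposable if and only if f is weakly R̄_f-min homogeneous and weakly R̄_f-max homogeneous. -/
set_option linter.unusedSectionVars false

namespace Stmt7


open Finset

variable {L : Type*} [LinearOrder L] [BoundedOrder L] {n : ℕ}

/-- two-valued vector: `b` on `T`, `a` elsewhere. -/
def tv (T : Finset (Fin n)) (b a : L) : Fin n → L := fun i => if i ∈ T then b else a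

lemma tv_empty (b a : L) : tv (∅ : Finset (Fin n)) b a = fun _ => a := by
  funext i; simp [tv]

lemma tv_univ (b a : L) : tv (univ : Finset (Fin n)) b a = fun _ => b := by
  funext i; simp [tv]

lemma mem02 {x : Fin n → L} {a b : L} (h : ∀ i, x i = a ∨ x i = b) : x ∈ Lpq L n 0 2 := by
  refine ⟨Nat.zero_le _, ?_⟩
  have hsub : Finset.univ.image x ⊆ {a, b} := by
    intro z hz
    simp only [Finset.mem_image] at hz
    obtain ⟨i, _, rfl⟩ := hz
    rcases h i with h' | h' <;> simp [h']
  calc (Finset.univ.image x).card ≤ ({a, b} : Finset L).card := Finset.card_le_card hsub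
    _ ≤ 2 := (Finset.card_insert_le _ _).trans (by simp)

lemma tv_mem {T : Finset (Fin n)} {b a : L} : tv T b a ∈ Lpq L n 0 2 :=
  mem02 (a := a) (b := b) (fun i => by
    by_cases h : i ∈ T
    · exact Or.inr (by simp [tv, h])
    · exact Or.inl (by simp [tv, h]))

lemma mem13 {x : Fin n → L} (i₀ : Fin n) (h0 : x i₀ = ⊥ ∨ x i₀ = ⊤)
    (h3 : (Finset.univ.image x).card ≤ 3) : x ∈ Lpq L n 1 3 := by
  refine ⟨?_, h3⟩
  have hmem : x i₀ ∈ (Finset.univ.image x) ∩ ({⊥, ⊤} : Finset L) := by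
    rw [Finset.mem_inter]
    constructor
    · exact Finset.mem_image_of_mem x (Finset.mem_univ i₀)
    · rcases h0 with h | h <;> simp [h]
  exact Finset.card_pos.mpr ⟨_, hmem⟩

lemma med3_eq {A t B : L} (h : A ≤ B) : med3 A t B = (A ⊔ t) ⊓ B := by
  unfold med3
  rw [show B ⊔ A = B from sup_eq_left.mpr h, inf_assoc,
    show (t ⊔ B) ⊓ B = B from inf_eq_right.mpr le_sup_right]



def zero (R : Finset (Fin n)) (g : Fin n → L) : Fin n → L := fun i => if i ∈ R then ⊥ else g i

def topp (R : Finset (Fin n)) (g : Fin n → L) : Fin n → L := fun i => if i ∈ R then ⊤ else g i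

lemma zero_bound {f : (Fin n → L) → L}
    (ha : ∀ x ∈ Lpq L n 0 2 ∪ Lpq L n 1 3, ∀ k, f x ≤ f (Function.update x k ⊥) ⊔ x k)
    (g : Fin n → L) (c : L) (S : Finset (Fin n))
    (hgc : ∀ k ∈ S, g k ≤ c)
    (hmem : ∀ R ⊆ S, zero R g ∈ Lpq L n 0 2 ∪ Lpq L n 1 3) :
    f g ≤ f (zero S g) ⊔ c := by
  classical
  induction S using Finset.induction_on with
  | empty =>
    have h0 : zero ∅ g = g := by funext i; simp [zero]
    rw [h0]; exact le_sup_left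
  | @insert a S haS IH =>
    have h1 : f g ≤ f (zero S g) ⊔ c :=
      IH (fun k hk => hgc k (mem_insert_of_mem hk))
        (fun R hR => hmem R (hR.trans (subset_insert a S)))
    have h2 : f (zero S g) ≤ f (Function.update (zero S g) a ⊥) ⊔ (zero S g) a :=
      ha _ (hmem S (subset_insert a S)) a
    have h3 : Function.update (zero S g) a ⊥ = zero (insert a S) g := by
      funext i
      rcases eq_or_ne i a with rfl | hia
      · simp [zero]
      · simp [Function.update_of_ne hia, zero, hia]
    have h4 : (zero S g) a = g a := by simp [zero, haS]
    rw [h3, h4] at h2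
    have h5 : g a ≤ c := hgc a (mem_insert_self a S)
    calc f g ≤ f (zero S g) ⊔ c := h1
      _ ≤ (f (zero (insert a S) g) ⊔ g a) ⊔ c := sup_le_sup_right h2 c
      _ ≤ f (zero (insert a S) g) ⊔ c :=
        sup_le (sup_le le_sup_left (h5.trans le_sup_right)) le_sup_right

lemma top_bound {f : (Fin n → L) → L}
    (hb : ∀ x ∈ Lpq L n 0 2 ∪ Lpq L n 1 3, ∀ k, f (Function.update x k ⊤) ⊓ x k ≤ f x)
    (g : Fin n → L) (c : L) (S : Finset (Fin n))
    (hgc : ∀ k ∈ S, c ≤ g k)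
    (hmem : ∀ R ⊆ S, topp R g ∈ Lpq L n 0 2 ∪ Lpq L n 1 3) :
    f (topp S g) ⊓ c ≤ f g := by
  classical
  induction S using Finset.induction_on with
  | empty =>
    have h0 : topp ∅ g = g := by funext i; simp [topp]
    rw [h0]; exact inf_le_left
  | @insert a S haS IH =>
    have h1 : f (topp S g) ⊓ c ≤ f g :=
      IH (fun k hk => hgc k (mem_insert_of_mem hk))
        (fun R hR => hmem R (hR.trans (subset_insert a S)))
    have h2 : f (Function.update (topp S g) a ⊤) ⊓ (topp S g) a ≤ f (topp S g) :=
      hb _ (hmem S (subset_insert a S)) a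
    have h3 : Function.update (topp S g) a ⊤ = topp (insert a S) g := by
      funext i
      rcases eq_or_ne i a with rfl | hia
      · simp [topp]
      · simp [Function.update_of_ne hia, topp, hia]
    have h4 : (topp S g) a = g a := by simp [topp, haS]
    rw [h3, h4] at h2
    have h5 : c ≤ g a := hgc a (mem_insert_self a S)
    calc f (topp (insert a S) g) ⊓ c
        ≤ (f (topp (insert a S) g) ⊓ g a) ⊓ c := le_inf (le_inf inf_le_left (inf_le_right.trans h5)) inf_le_right
      _ ≤ f (topp S g) ⊓ c := inf_le_inf_right c h2
      _ ≤ f g := h1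

lemma card_image_comp_le (x : Fin n → L) (φ : L → L) :
    (Finset.univ.image (fun i => φ (x i))).card ≤ (Finset.univ.image x).card := by
  classical
  have h : Finset.univ.image (fun i => φ (x i)) = (Finset.univ.image x).image φ := by
    rw [Finset.image_image]; rfl
  rw [h]; exact Finset.card_image_le

lemma mem13' {x : Fin n → L} (i₀ : Fin n) (h0 : x i₀ = ⊥ ∨ x i₀ = ⊤)
    (h3 : (Finset.univ.image x).card ≤ 3) : x ∈ Lpq L n 1 3 := by
  refine ⟨?_, h3⟩
  have hmem : x i₀ ∈ (Finset.univ.image x) ∩ ({⊥, ⊤} : Finset L) := by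
    rw [Finset.mem_inter]
    refine ⟨Finset.mem_image_of_mem x (Finset.mem_univ i₀), ?_⟩
    rcases h0 with h | h <;> simp [h]
  exact Finset.card_pos.mpr ⟨_, hmem⟩

lemma topp_mem {g : Fin n → L} (hg2 : (Finset.univ.image g).card ≤ 2) (R : Finset (Fin n)) :
    topp R g ∈ Lpq L n 0 2 ∪ Lpq L n 1 3 := by
  classical
  have hcard : (Finset.univ.image (topp R g)).card ≤ 3 := by
    have hsub : Finset.univ.image (topp R g) ⊆ insert ⊤ (Finset.univ.image g) := by
      intro z hz
      simp only [Finset.mem_image] at hz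
      obtain ⟨i, _, rfl⟩ := hz
      by_cases h : i ∈ R
      · simp [topp, h]
      · simp only [topp, if_neg h]
        exact Finset.mem_insert_of_mem (Finset.mem_image_of_mem g (Finset.mem_univ i))
    calc (Finset.univ.image (topp R g)).card ≤ (insert ⊤ (Finset.univ.image g)).card :=
          Finset.card_le_card hsub
      _ ≤ (Finset.univ.image g).card + 1 := Finset.card_insert_le _ _
      _ ≤ 3 := by omega
  rcases R.eq_empty_or_nonempty with rfl | ⟨i₀, hi₀⟩
  · left
    have h0 : topp ∅ g = g := by funext i; simp [topp]
    rw [h0]; exact ⟨Nat.zero_le _, hg2⟩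
  · right
    exact mem13' i₀ (Or.inr (by simp [topp, hi₀])) hcard

lemma zero_mem {g : Fin n → L} (hg2 : (Finset.univ.image g).card ≤ 2) (R : Finset (Fin n)) :
    zero R g ∈ Lpq L n 0 2 ∪ Lpq L n 1 3 := by
  classical
  have hcard : (Finset.univ.image (zero R g)).card ≤ 3 := by
    have hsub : Finset.univ.image (zero R g) ⊆ insert ⊥ (Finset.univ.image g) := by
      intro z hz
      simp only [Finset.mem_image] at hz
      obtain ⟨i, _, rfl⟩ := hz
      by_cases h : i ∈ R
      · simp [zero, h]
      · simp only [zero, if_neg h]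
        exact Finset.mem_insert_of_mem (Finset.mem_image_of_mem g (Finset.mem_univ i))
    calc (Finset.univ.image (zero R g)).card ≤ (insert ⊥ (Finset.univ.image g)).card :=
          Finset.card_le_card hsub
      _ ≤ (Finset.univ.image g).card + 1 := Finset.card_insert_le _ _
      _ ≤ 3 := by omega
  rcases R.eq_empty_or_nonempty with rfl | ⟨i₀, hi₀⟩
  · left
    have h0 : zero ∅ g = g := by funext i; simp [zero]
    rw [h0]; exact ⟨Nat.zero_le _, hg2⟩
  · right
    exact mem13' i₀ (Or.inl (by simp [zero, hi₀])) hcard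



lemma keyA (f : (Fin n → L) → L) (hmono : Monotone f)
    (hmin : ∀ (T : Finset (Fin n)) (t : L), f (fun _ => ⊥) ≤ t → t ≤ f (fun _ => ⊤) →
      f (tv T t ⊥) = f (tv T ⊤ ⊥) ⊓ t)
    (hmax : ∀ (T : Finset (Fin n)) (t : L), f (fun _ => ⊥) ≤ t → t ≤ f (fun _ => ⊤) →
      f (tv T ⊤ t) = f (tv T ⊤ ⊥) ⊔ t)
    (x : Fin n → L) (hx : (Finset.univ.image x).card ≤ 3)
    (k : Fin n) (hk : x k < f x) : f x ≤ f (Function.update x k ⊥) := by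
  classical
  set m := f (fun _ => ⊥) with hm
  set M := f (fun _ => ⊤) with hM
  have hmM : m ≤ M := hmono (fun i => bot_le)
  have hxM : f x ≤ M := hmono (fun i => le_top)
  have hbotx : (fun _ => (⊥ : L)) ≤ Function.update x k ⊥ := fun i => bot_le
  by_cases hfm : f x ≤ m
  · exact hfm.trans (hmono hbotx)
  have hm_lt : m < f x := not_le.mp hfm
  have hcM : x k < M := hk.trans_le hxM
  -- majorant/minorant tools
  have maj : ∀ (T : Finset (Fin n)) (s : L), (∀ i, i ∉ T → x i ≤ s) → f x ≤ f (tv T ⊤ s) := by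
    intro T s h
    refine hmono (fun i => ?_)
    by_cases hi : i ∈ T
    · simp [tv, hi]
    · simpa [tv, hi] using h i hi
  have minr : ∀ (T : Finset (Fin n)) (s : L), k ∉ T → (∀ i ∈ T, s ≤ x i) →
      f (tv T s ⊥) ≤ f (Function.update x k ⊥) := by
    intro T s hkT h
    refine hmono (fun i => ?_)
    by_cases hi : i ∈ T
    · have hik : i ≠ k := fun he => hkT (he ▸ hi)
      simpa [tv, hi, Function.update_of_ne hik] using h i hi
    · simp [tv, hi]
  have hfbot : f (tv (∅ : Finset (Fin n)) ⊤ ⊥) = m := by rw [tv_empty]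
  set T : Finset (Fin n) := Finset.univ.filter (fun i => x k < x i) with hT
  have hkT : k ∉ T := by simp [hT]
  have hoffT : ∀ i, i ∉ T → x i ≤ x k := by
    intro i hi
    simpa [hT] using hi
  by_cases hTe : T = ∅
  · -- all coordinates ≤ x k : contradiction with m < f x and x k < f x
    have hc1M : x k ⊔ m ≤ M := sup_le hcM.le hmM
    have h1 : f x ≤ f (tv (∅ : Finset (Fin n)) ⊤ (x k ⊔ m)) :=
      maj ∅ (x k ⊔ m) (fun i _ => (hoffT i (by simp [hTe])).trans le_sup_left)
    rw [hmax ∅ (x k ⊔ m) le_sup_right hc1M, hfbot] at h1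
    rcases le_sup_iff.mp h1 with h2 | h2
    · exact absurd h2 (not_le.mpr hm_lt)
    · rcases le_sup_iff.mp h2 with h3 | h3
      · exact absurd h3 (not_le.mpr hk)
      · exact absurd h3 (not_le.mpr hm_lt)
  -- values of x on T
  have hTne : (T.image x).Nonempty :=
    Finset.image_nonempty.mpr (Finset.nonempty_iff_ne_empty.mpr hTe)
  have hT2 : (T.image x).card ≤ 2 := by
    have hsub : T.image x ⊆ (Finset.univ.image x).erase (x k) := by
      intro z hz
      simp only [Finset.mem_image] at hz
      obtain ⟨i, hi, rfl⟩ := hz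
      refine Finset.mem_erase.mpr ⟨?_, Finset.mem_image_of_mem x (Finset.mem_univ i)⟩
      have : x k < x i := by simpa [hT] using hi
      exact (ne_of_gt this)
    have hck : x k ∈ Finset.univ.image x := Finset.mem_image_of_mem x (Finset.mem_univ k)
    have := Finset.card_le_card hsub
    rw [Finset.card_erase_of_mem hck] at this
    omega
  set u := (T.image x).min' hTne with hu
  set w := (T.image x).max' hTne with hw
  have hcu : x k < u := by
    obtain ⟨i, hi, hxi⟩ := Finset.mem_image.mp ((T.image x).min'_mem hTne)
    have : x k < x i := by simpa [hT] using hi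
    exact lt_of_lt_of_eq this (hxi.trans hu.symm)
  have huw : u ≤ w := Finset.min'_le _ _ ((T.image x).max'_mem hTne)
  have hTu : ∀ i ∈ T, u ≤ x i := fun i hi =>
    Finset.min'_le _ _ (Finset.mem_image_of_mem x hi)
  have hTw : ∀ i ∈ T, x i ≤ w := fun i hi =>
    Finset.le_max' _ _ (Finset.mem_image_of_mem x hi)
  have hallw : ∀ i, x i ≤ w := by
    intro i
    by_cases hi : i ∈ T
    · exact hTw i hi
    · exact (hoffT i hi).trans (hcu.le.trans huw)
  have htwo : ∀ i ∈ T, x i = u ∨ x i = w := by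
    intro i hi
    by_contra hcon
    push_neg at hcon
    obtain ⟨hneu, hnew⟩ := hcon
    have h1 : u < x i := lt_of_le_of_ne (hTu i hi) (Ne.symm hneu)
    have h2 : x i < w := lt_of_le_of_ne (hTw i hi) hnew
    have hsub : ({u, x i, w} : Finset L) ⊆ T.image x := by
      intro z hz
      simp only [Finset.mem_insert, Finset.mem_singleton] at hz
      rcases hz with rfl | rfl | rfl
      · exact (T.image x).min'_mem hTne
      · exact Finset.mem_image_of_mem x hi
      · exact (T.image x).max'_mem hTne
    have hcard3 : ({u, x i, w} : Finset L).card = 3 := by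
      rw [Finset.card_insert_of_notMem (by simp [h1.ne, (h1.trans h2).ne]),
        Finset.card_insert_of_notMem (by simp [h2.ne]), Finset.card_singleton]
    have := Finset.card_le_card hsub
    omega
  set W : Finset (Fin n) := T.filter (fun i => w ≤ x i) with hW
  have hkW : k ∉ W := fun h => hkT (Finset.mem_of_mem_filter k h)
  have hWle : ∀ i ∈ W, w ≤ x i := by
    intro i hi
    exact (Finset.mem_filter.mp hi).2
  have hoffW : ∀ i, i ∉ W → x i ≤ u := by
    intro i hi
    by_cases hiT : i ∈ T
    · have : ¬ w ≤ x i := fun h => hi (Finset.mem_filter.mpr ⟨hiT, h⟩)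
      rcases htwo i hiT with h | h
      · exact h.le
      · exact absurd h.ge this
    · exact (hoffT i hiT).trans hcu.le
  -- step 1 : f x ≤ f (tv T ⊤ ⊥)
  have hfT : f x ≤ f (tv T ⊤ ⊥) := by
    have h1 : f x ≤ f (tv T ⊤ (x k ⊔ m)) :=
      maj T (x k ⊔ m) (fun i hi => (hoffT i hi).trans le_sup_left)
    rw [hmax T (x k ⊔ m) le_sup_right (sup_le hcM.le hmM)] at h1
    rcases le_sup_iff.mp h1 with h2 | h2
    · exact h2
    · rcases le_sup_iff.mp h2 with h3 | h3
      · exact absurd h3 (not_le.mpr hk)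
      · exact absurd h3 (not_le.mpr hm_lt)
  rcases le_or_gt u M with huM | hMu
  · -- u ≤ M
    set u₂ := (u ⊔ m) ⊓ M with hu₂
    have hu₂m : m ≤ u₂ := le_inf le_sup_right hmM
    have hu₂M : u₂ ≤ M := inf_le_right
    have hu_le_u₂ : u ≤ u₂ := le_inf le_sup_left huM
    have hx_le : f x ≤ f (tv W ⊤ ⊥) ⊔ u₂ := by
      have h1 : f x ≤ f (tv W ⊤ u₂) :=
        maj W u₂ (fun i hi => (hoffW i hi).trans hu_le_u₂)
      rwa [hmax W u₂ hu₂m hu₂M] at h1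
    rcases le_sup_iff.mp hx_le with hxW | hxu₂
    · -- f x ≤ f (tv W ⊤ ⊥)
      rcases le_or_gt w M with hwM | hMw
      · -- w ≤ M
        have hmw : m ≤ w := by
          by_contra hcon
          push_neg at hcon
          have h1 : f x ≤ f (tv (∅ : Finset (Fin n)) ⊤ m) :=
            maj ∅ m (fun i _ => (hallw i).trans hcon.le)
          rw [hmax ∅ m le_rfl hmM, hfbot, sup_idem] at h1
          exact absurd h1 (not_le.mpr hm_lt)
        have hfxw : f x ≤ w := by
          have h1 : f x ≤ f (tv (∅ : Finset (Fin n)) ⊤ w) :=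
            maj ∅ w (fun i _ => hallw i)
          rw [hmax ∅ w hmw hwM, hfbot, sup_eq_right.mpr hmw] at h1
          exact h1
        have h2 : f (tv W w ⊥) ≤ f (Function.update x k ⊥) := minr W w hkW hWle
        rw [hmin W w hmw hwM] at h2
        exact (le_inf hxW hfxw).trans h2
      · -- M < w
        have h2 : f (tv W M ⊥) ≤ f (Function.update x k ⊥) :=
          minr W M hkW (fun i hi => hMw.le.trans (hWle i hi))
        rw [hmin W M hmM le_rfl] at h2
        exact (le_inf hxW hxM).trans h2
    · -- f x ≤ u₂
      have hfxu : f x ≤ u := by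
        have h1 : f x ≤ u ⊔ m := hxu₂.trans inf_le_left
        rcases le_sup_iff.mp h1 with h2 | h2
        · exact h2
        · exact absurd h2 (not_le.mpr hm_lt)
      have hmu : m ≤ u := hm_lt.le.trans hfxu
      have hu₂u : u₂ ≤ u := inf_le_left.trans (sup_le le_rfl hmu)
      have h2 : f (tv T u₂ ⊥) ≤ f (Function.update x k ⊥) :=
        minr T u₂ hkT (fun i hi => hu₂u.trans (hTu i hi))
      rw [hmin T u₂ hu₂m hu₂M] at h2
      exact (le_inf hfT hxu₂).trans h2
  · -- M < u
    have h2 : f (tv T M ⊥) ≤ f (Function.update x k ⊥) :=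
      minr T M hkT (fun i hi => hMu.le.trans (hTu i hi))
    rw [hmin T M hmM le_rfl] at h2
    exact (le_inf hfT hxM).trans h2

lemma keyB (f : (Fin n → L) → L) (hmono : Monotone f)
    (hmin : ∀ (T : Finset (Fin n)) (t : L), f (fun _ => ⊥) ≤ t → t ≤ f (fun _ => ⊤) →
      f (tv T t ⊥) = f (tv T ⊤ ⊥) ⊓ t)
    (hmax : ∀ (T : Finset (Fin n)) (t : L), f (fun _ => ⊥) ≤ t → t ≤ f (fun _ => ⊤) →
      f (tv T ⊤ t) = f (tv T ⊤ ⊥) ⊔ t)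
    (x : Fin n → L) (hx : (Finset.univ.image x).card ≤ 3)
    (k : Fin n) (hk : f x < x k) : f (Function.update x k ⊤) ≤ f x := by
  classical
  set m := f (fun _ => ⊥) with hm
  set M := f (fun _ => ⊤) with hM
  have hmM : m ≤ M := hmono (fun i => bot_le)
  have hmx : m ≤ f x := hmono (fun i => bot_le)
  have htopx : Function.update x k ⊤ ≤ (fun _ => (⊤ : L)) := fun i => le_top
  by_cases hfM : M ≤ f x
  · exact (hmono htopx).trans hfM
  have hM_lt : f x < M := not_le.mp hfM
  have hcm : m < x k := hmx.trans_lt hk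
  -- majorant/minorant tools (note tv on complements)
  have maj : ∀ (T : Finset (Fin n)) (s : L), k ∉ T → (∀ i ∈ T, x i ≤ s) →
      f (Function.update x k ⊤) ≤ f (tv Tᶜ ⊤ s) := by
    intro T s hkT h
    refine hmono (fun i => ?_)
    by_cases hi : i ∈ T
    · have hik : i ≠ k := fun he => hkT (he ▸ hi)
      have : i ∉ Tᶜ := by simpa using hi
      simpa [tv, this, Function.update_of_ne hik] using h i hi
    · have : i ∈ Tᶜ := Finset.mem_compl.mpr hi
      simp [tv, this]
  have minr : ∀ (T : Finset (Fin n)) (s : L), (∀ i, i ∉ T → s ≤ x i) →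
      f (tv Tᶜ s ⊥) ≤ f x := by
    intro T s h
    refine hmono (fun i => ?_)
    by_cases hi : i ∈ T
    · have : i ∉ Tᶜ := by simpa using hi
      simp [tv, this]
    · have hic : i ∈ Tᶜ := Finset.mem_compl.mpr hi
      simpa [tv, hic] using h i hi
  have hftop : f (tv ((∅ : Finset (Fin n)))ᶜ ⊤ ⊥) = M := by
    have : ((∅ : Finset (Fin n)))ᶜ = Finset.univ := by simp
    rw [this, tv_univ]
  set T : Finset (Fin n) := Finset.univ.filter (fun i => x i < x k) with hT
  have hkT : k ∉ T := by simp [hT]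
  have hoffT : ∀ i, i ∉ T → x k ≤ x i := by
    intro i hi
    simpa [hT] using hi
  by_cases hTe : T = ∅
  · -- all coordinates ≥ x k : contradiction
    have h1 : f (tv ((∅ : Finset (Fin n)))ᶜ (x k ⊓ M) ⊥) ≤ f x :=
      minr ∅ (x k ⊓ M) (fun i _ => inf_le_left.trans (hoffT i (by simp [hTe])))
    rw [hmin (∅ : Finset (Fin n))ᶜ (x k ⊓ M) (le_inf hcm.le hmM) inf_le_right, hftop] at h1
    rcases inf_le_iff.mp h1 with h2 | h2
    · exact absurd h2 (not_le.mpr hM_lt)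
    · rcases inf_le_iff.mp h2 with h3 | h3
      · exact absurd h3 (not_le.mpr hk)
      · exact absurd h3 (not_le.mpr hM_lt)
  have hTne : (T.image x).Nonempty :=
    Finset.image_nonempty.mpr (Finset.nonempty_iff_ne_empty.mpr hTe)
  have hT2 : (T.image x).card ≤ 2 := by
    have hsub : T.image x ⊆ (Finset.univ.image x).erase (x k) := by
      intro z hz
      simp only [Finset.mem_image] at hz
      obtain ⟨i, hi, rfl⟩ := hz
      refine Finset.mem_erase.mpr ⟨?_, Finset.mem_image_of_mem x (Finset.mem_univ i)⟩
      have : x i < x k := by simpa [hT] using hi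
      exact (ne_of_lt this)
    have hck : x k ∈ Finset.univ.image x := Finset.mem_image_of_mem x (Finset.mem_univ k)
    have := Finset.card_le_card hsub
    rw [Finset.card_erase_of_mem hck] at this
    omega
  set u := (T.image x).max' hTne with hu
  set w := (T.image x).min' hTne with hw
  have huc : u < x k := by
    obtain ⟨i, hi, hxi⟩ := Finset.mem_image.mp ((T.image x).max'_mem hTne)
    have : x i < x k := by simpa [hT] using hi
    exact lt_of_eq_of_lt (hxi.trans hu.symm).symm this
  have hwu : w ≤ u := Finset.min'_le _ _ ((T.image x).max'_mem hTne)
  have hTu : ∀ i ∈ T, x i ≤ u := fun i hi =>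
    Finset.le_max' _ _ (Finset.mem_image_of_mem x hi)
  have hTw : ∀ i ∈ T, w ≤ x i := fun i hi =>
    Finset.min'_le _ _ (Finset.mem_image_of_mem x hi)
  have hallw : ∀ i, w ≤ x i := by
    intro i
    by_cases hi : i ∈ T
    · exact hTw i hi
    · exact (hwu.trans huc.le).trans (hoffT i hi)
  have htwo : ∀ i ∈ T, x i = u ∨ x i = w := by
    intro i hi
    by_contra hcon
    push_neg at hcon
    obtain ⟨hneu, hnew⟩ := hcon
    have h1 : x i < u := lt_of_le_of_ne (hTu i hi) hneu
    have h2 : w < x i := lt_of_le_of_ne (hTw i hi) (Ne.symm hnew)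
    have hsub : ({w, x i, u} : Finset L) ⊆ T.image x := by
      intro z hz
      simp only [Finset.mem_insert, Finset.mem_singleton] at hz
      rcases hz with rfl | rfl | rfl
      · exact (T.image x).min'_mem hTne
      · exact Finset.mem_image_of_mem x hi
      · exact (T.image x).max'_mem hTne
    have hcard3 : ({w, x i, u} : Finset L).card = 3 := by
      rw [Finset.card_insert_of_notMem (by simp [h2.ne, (h2.trans h1).ne]),
        Finset.card_insert_of_notMem (by simp [h1.ne]), Finset.card_singleton]
    have := Finset.card_le_card hsub
    omega
  set W : Finset (Fin n) := T.filter (fun i => x i ≤ w) with hW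
  have hkW : k ∉ W := fun h => hkT (Finset.mem_of_mem_filter k h)
  have hWle : ∀ i ∈ W, x i ≤ w := by
    intro i hi
    exact (Finset.mem_filter.mp hi).2
  have hoffW : ∀ i, i ∉ W → u ≤ x i := by
    intro i hi
    by_cases hiT : i ∈ T
    · have hnot : ¬ x i ≤ w := fun h => hi (Finset.mem_filter.mpr ⟨hiT, h⟩)
      rcases htwo i hiT with h | h
      · exact h.ge
      · exact absurd h.le hnot
    · exact huc.le.trans (hoffT i hiT)
  -- step 1 : f (tv Tᶜ ⊤ ⊥) ≤ f x
  have hfT : f (tv Tᶜ ⊤ ⊥) ≤ f x := by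
    have h1 : f (tv Tᶜ (x k ⊓ M) ⊥) ≤ f x :=
      minr T (x k ⊓ M) (fun i hi => inf_le_left.trans (hoffT i hi))
    rw [hmin Tᶜ (x k ⊓ M) (le_inf hcm.le hmM) inf_le_right] at h1
    rcases inf_le_iff.mp h1 with h2 | h2
    · exact h2
    · rcases inf_le_iff.mp h2 with h3 | h3
      · exact absurd h3 (not_le.mpr hk)
      · exact absurd h3 (not_le.mpr hM_lt)
  rcases le_or_gt m u with hmu | hum
  · -- m ≤ u
    set u₂ := (u ⊓ M) ⊔ m with hu₂
    have hu₂m : m ≤ u₂ := le_sup_right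
    have hu₂M : u₂ ≤ M := sup_le inf_le_right hmM
    have hu₂u : u₂ ≤ u := sup_le inf_le_left hmu
    have hx_ge : f (tv Wᶜ ⊤ ⊥) ⊓ u₂ ≤ f x := by
      have h1 : f (tv Wᶜ u₂ ⊥) ≤ f x :=
        minr W u₂ (fun i hi => hu₂u.trans (hoffW i hi))
      rwa [hmin Wᶜ u₂ hu₂m hu₂M] at h1
    rcases inf_le_iff.mp hx_ge with hWx | hu₂x
    · -- f (tv Wᶜ ⊤ ⊥) ≤ f x
      rcases le_or_gt m w with hmw | hwm
      · -- m ≤ w : first derive w ≤ M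
        have hwM : w ≤ M := by
          by_contra hcon
          push_neg at hcon
          have h1 : f (tv ((∅ : Finset (Fin n)))ᶜ M ⊥) ≤ f x :=
            minr ∅ M (fun i _ => hcon.le.trans (hallw i))
          rw [hmin ((∅ : Finset (Fin n)))ᶜ M hmM le_rfl, hftop, inf_idem] at h1
          exact absurd h1 (not_le.mpr hM_lt)
        have hwfx : w ≤ f x := by
          have h1 : f (tv ((∅ : Finset (Fin n)))ᶜ w ⊥) ≤ f x :=
            minr ∅ w (fun i _ => hallw i)
          rw [hmin ((∅ : Finset (Fin n)))ᶜ w hmw hwM, hftop,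
            inf_eq_right.mpr hwM] at h1
          exact h1
        have h2 : f (Function.update x k ⊤) ≤ f (tv Wᶜ ⊤ w) := maj W w hkW hWle
        rw [hmax Wᶜ w hmw hwM] at h2
        exact h2.trans (sup_le hWx hwfx)
      · -- w < m
        have h2 : f (Function.update x k ⊤) ≤ f (tv Wᶜ ⊤ m) :=
          maj W m hkW (fun i hi => (hWle i hi).trans hwm.le)
        rw [hmax Wᶜ m le_rfl hmM] at h2
        exact h2.trans (sup_le hWx hmx)
    · -- u₂ ≤ f x
      have hufx : u ≤ f x := by
        have h1 : u ⊓ M ≤ f x := le_sup_left.trans hu₂x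
        rcases inf_le_iff.mp h1 with h2 | h2
        · exact h2
        · exact absurd h2 (not_le.mpr hM_lt)
      have huM : u ≤ M := hufx.trans hM_lt.le
      have hu_le_u₂ : u ≤ u₂ := le_sup_left.trans' (le_inf le_rfl huM)
      have h2 : f (Function.update x k ⊤) ≤ f (tv Tᶜ ⊤ u₂) :=
        maj T u₂ hkT (fun i hi => (hTu i hi).trans hu_le_u₂)
      rw [hmax Tᶜ u₂ hu₂m hu₂M] at h2
      exact h2.trans (sup_le hfT hu₂x)
  · -- u < m
    have h2 : f (Function.update x k ⊤) ≤ f (tv Tᶜ ⊤ m) :=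
      maj T m hkT (fun i hi => (hTu i hi).trans hum.le)
    rw [hmax Tᶜ m le_rfl hmM] at h2
    exact h2.trans (sup_le hfT hmx)

end Stmt7

/-- a nondecreasing function on a bounded chain is weakly median
decomposable iff it is weakly R̄_f-min homogeneous and weakly R̄_f-max homogeneous. -/
theorem stmt7 {L : Type*} [LinearOrder L] [BoundedOrder L] {n : ℕ}
    (f : (Fin n → L) → L) (hmono : Monotone f) :
    (∀ x ∈ Lpq L n 0 2 ∪ Lpq L n 1 3, ∀ k : Fin n,
        f x = med3 (f (Function.update x k ⊥)) (x k) (f (Function.update x k ⊤))) ↔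
    ((∀ x ∈ Lpq L n 0 2, ∀ c ∈ Set.Icc (f fun _ => (⊥ : L)) (f fun _ => ⊤),
        f (fun i => x i ⊓ c) = f x ⊓ c) ∧
     (∀ x ∈ Lpq L n 0 2, ∀ c ∈ Set.Icc (f fun _ => (⊥ : L)) (f fun _ => ⊤),
        f (fun i => x i ⊔ c) = f x ⊔ c)) := by
  classical
  have hupdbot : ∀ (x : Fin n → L) (k : Fin n), Function.update x k ⊥ ≤ x := by
    intro x k i
    rcases eq_or_ne i k with rfl | h
    · simp
    · simp [Function.update_of_ne h]
  have hupdtop : ∀ (x : Fin n → L) (k : Fin n), x ≤ Function.update x k ⊤ := by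
    intro x k i
    rcases eq_or_ne i k with rfl | h
    · simp
    · simp [Function.update_of_ne h]
  constructor
  · -- decomposability → homogeneity
    intro hD
    have hAB : ∀ (x : Fin n → L) (k : Fin n),
        f (Function.update x k ⊥) ≤ f (Function.update x k ⊤) :=
      fun x k => hmono ((hupdbot x k).trans (hupdtop x k))
    have ha : ∀ x ∈ Lpq L n 0 2 ∪ Lpq L n 1 3, ∀ k,
        f x ≤ f (Function.update x k ⊥) ⊔ x k := by
      intro x hx k
      rw [hD x hx k, Stmt7.med3_eq (hAB x k)]
      exact inf_le_left
    have hb : ∀ x ∈ Lpq L n 0 2 ∪ Lpq L n 1 3, ∀ k,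
        f (Function.update x k ⊤) ⊓ x k ≤ f x := by
      intro x hx k
      rw [hD x hx k, Stmt7.med3_eq (hAB x k)]
      exact le_inf (inf_le_right.trans le_sup_right) inf_le_left
    have hconst : ∀ t : L, f (fun _ => ⊥) ≤ t → t ≤ f (fun _ => ⊤) → f (fun _ => t) = t := by
      intro t hmt htM
      have h1 : f (fun _ => t) ≤ t := by
        have hz := Stmt7.zero_bound ha (fun _ => t) t Finset.univ (fun k _ => le_rfl)
          (fun R _ => Or.inl (Stmt7.mem02 (a := (⊥ : L)) (b := t) (fun i => by
            by_cases h : i ∈ R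
            · exact Or.inl (by simp [Stmt7.zero, h])
            · exact Or.inr (by simp [Stmt7.zero, h]))))
        have hz0 : Stmt7.zero (Finset.univ : Finset (Fin n)) (fun _ => t) = (fun _ => (⊥ : L)) := by
          funext i; simp [Stmt7.zero]
        rw [hz0] at hz
        exact hz.trans (sup_le hmt le_rfl)
      have h2 : t ≤ f (fun _ => t) := by
        have hz := Stmt7.top_bound hb (fun _ => t) t Finset.univ (fun k _ => le_rfl)
          (fun R _ => Or.inl (Stmt7.mem02 (a := (⊤ : L)) (b := t) (fun i => by
            by_cases h : i ∈ R
            · exact Or.inl (by simp [Stmt7.topp, h])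
            · exact Or.inr (by simp [Stmt7.topp, h]))))
        have hz0 : Stmt7.topp (Finset.univ : Finset (Fin n)) (fun _ => t) = (fun _ => (⊤ : L)) := by
          funext i; simp [Stmt7.topp]
        rw [hz0] at hz
        exact (le_inf htM le_rfl).trans hz
      exact le_antisymm h1 h2
    constructor
    · -- min homogeneity
      intro x hx c hc
      obtain ⟨hmc, hcM⟩ := hc
      have hx2 : (Finset.univ.image x).card ≤ 2 := hx.2
      have h1 : f (fun i => x i ⊓ c) ≤ f x ⊓ c := by
        refine le_inf (hmono fun i => inf_le_left) ?_
        have := hmono (fun i => (inf_le_right : x i ⊓ c ≤ c) :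
          (fun i => x i ⊓ c) ≤ (fun _ => c))
        exact this.trans (hconst c hmc hcM).le
      refine le_antisymm h1 ?_
      set S := Finset.univ.filter (fun i => c < x i) with hS
      have hg2 : (Finset.univ.image (fun i => x i ⊓ c)).card ≤ 2 :=
        (Stmt7.card_image_comp_le x (· ⊓ c)).trans hx2
      have hkey := Stmt7.top_bound hb (fun i => x i ⊓ c) c S
        (fun k hk => le_inf (le_of_lt (by simpa [hS] using hk)) le_rfl)
        (fun R _ => Stmt7.topp_mem hg2 R)
      have hxle : x ≤ Stmt7.topp S (fun i => x i ⊓ c) := by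
        intro i
        by_cases hi : i ∈ S
        · simp [Stmt7.topp, hi]
        · have hle : x i ≤ c := by simpa [hS] using hi
          simp only [Stmt7.topp, if_neg hi]
          exact le_inf le_rfl hle
      calc f x ⊓ c ≤ f (Stmt7.topp S (fun i => x i ⊓ c)) ⊓ c :=
            inf_le_inf_right c (hmono hxle)
        _ ≤ f (fun i => x i ⊓ c) := hkey
    · -- max homogeneity
      intro x hx c hc
      obtain ⟨hmc, hcM⟩ := hc
      have hx2 : (Finset.univ.image x).card ≤ 2 := hx.2
      have h1 : f x ⊔ c ≤ f (fun i => x i ⊔ c) := by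
        refine sup_le (hmono fun i => le_sup_left) ?_
        have := hmono (fun i => (le_sup_right : c ≤ x i ⊔ c) :
          (fun _ => c) ≤ (fun i => x i ⊔ c))
        exact (hconst c hmc hcM).ge.trans this
      refine le_antisymm ?_ h1
      set S := Finset.univ.filter (fun i => x i < c) with hS
      have hg2 : (Finset.univ.image (fun i => x i ⊔ c)).card ≤ 2 :=
        (Stmt7.card_image_comp_le x (· ⊔ c)).trans hx2
      have hkey := Stmt7.zero_bound ha (fun i => x i ⊔ c) c S
        (fun k hk => sup_le (le_of_lt (by simpa [hS] using hk)) le_rfl)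
        (fun R _ => Stmt7.zero_mem hg2 R)
      have hxle : Stmt7.zero S (fun i => x i ⊔ c) ≤ x := by
        intro i
        by_cases hi : i ∈ S
        · simp [Stmt7.zero, hi]
        · have hle : c ≤ x i := by simpa [hS] using hi
          simp only [Stmt7.zero, if_neg hi]
          exact sup_le le_rfl hle
      calc f (fun i => x i ⊔ c) ≤ f (Stmt7.zero S (fun i => x i ⊔ c)) ⊔ c := hkey
        _ ≤ f x ⊔ c := sup_le_sup_right (hmono hxle) c
  · -- homogeneity → decomposability
    rintro ⟨hmin, hmax⟩ x hx k
    have hom_min : ∀ (T : Finset (Fin n)) (t : L), f (fun _ => ⊥) ≤ t → t ≤ f (fun _ => ⊤) →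
        f (Stmt7.tv T t ⊥) = f (Stmt7.tv T ⊤ ⊥) ⊓ t := by
      intro T t h1 h2
      have h := hmin (Stmt7.tv T ⊤ ⊥) Stmt7.tv_mem t ⟨h1, h2⟩
      have heq : (fun i => Stmt7.tv T ⊤ ⊥ i ⊓ t) = Stmt7.tv T t ⊥ := by
        funext i; by_cases hi : i ∈ T <;> simp [Stmt7.tv, hi]
      rwa [heq] at h
    have hom_max : ∀ (T : Finset (Fin n)) (t : L), f (fun _ => ⊥) ≤ t → t ≤ f (fun _ => ⊤) →
        f (Stmt7.tv T ⊤ t) = f (Stmt7.tv T ⊤ ⊥) ⊔ t := by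
      intro T t h1 h2
      have h := hmax (Stmt7.tv T ⊤ ⊥) Stmt7.tv_mem t ⟨h1, h2⟩
      have heq : (fun i => Stmt7.tv T ⊤ ⊥ i ⊔ t) = Stmt7.tv T ⊤ t := by
        funext i; by_cases hi : i ∈ T <;> simp [Stmt7.tv, hi]
      rwa [heq] at h
    have hcard : (Finset.univ.image x).card ≤ 3 := by
      rcases hx with h | h
      · exact h.2.trans (by norm_num)
      · exact h.2
    have hAx : f (Function.update x k ⊥) ≤ f x := hmono (hupdbot x k)
    have hxB : f x ≤ f (Function.update x k ⊤) := hmono (hupdtop x k)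
    rw [Stmt7.med3_eq (hAx.trans hxB)]
    rcases lt_trichotomy (x k) (f x) with h | h | h
    · have h1 : f x = f (Function.update x k ⊥) :=
        le_antisymm (Stmt7.keyA f hmono hom_min hom_max x hcard k h) hAx
      rw [← h1, sup_eq_left.mpr h.le, inf_eq_left.mpr hxB]
    · exact le_antisymm (le_inf (h.ge.trans le_sup_right) hxB)
        (inf_le_left.trans (sup_le hAx h.le))
    · have h1 : f x = f (Function.update x k ⊤) :=
        le_antisymm hxB (Stmt7.keyB f hmono hom_min hom_max x hcard k h)
      rw [← h1, inf_eq_right.mpr (h.le.trans le_sup_right)]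
end

section
/- Let L be a bounded chain. Every nondecreasing weakly median decomposable function f : L^n → L is a lattice polynomial function, i.e., there exists α : 2^{[n]} → L such that f(x) = ⋁_{I⊆[n]} (α(I) ∧ ⋀_{i∈I} x_i) for all x ∈ L^n. -/
/-! Take `α I := f (χ_I)`, the value of `f` at the characteristic `{⊥, ⊤}`-tuple of `I`.
Median decomposition applied one coordinate at a time shows that on a tuple taking the value `⊤`
on `A`, `c` on `B \ A` and `⊥` elsewhere, `f` equals the clamp `f (χ_A) ⊔ (c ⊓ f (χ_{A ∪ B}))`;
all tuples met on the way take at most the three values `⊥, c, ⊤`, so they lie in the domain of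
weak median decomposability. Comparing an arbitrary `x` from below with such a tuple for
`c = ⋀_{i ∈ I} x_i` and from above with one for `c` the value of the polynomial at `x` then
gives the two inequalities. -/

open Finset Function

section Median

variable {α : Type*} [DistribLattice α]

lemma med3_eq_sup_inf {a b : α} (c : α) (h : a ≤ b) : med3 a c b = a ⊔ (c ⊓ b) := by
  rw [med3, sup_comm b a, sup_eq_right.2 h, inf_assoc, inf_eq_right.2 (le_sup_right : b ≤ c ⊔ b),
    inf_sup_right, inf_eq_left.2 h]

lemma med3_sup_inf_sup_inf {a a' a'' b c : α} (ha : a ≤ a'') (ha' : a' ≤ b) (ha'' : a'' ≤ b) :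
    med3 (a ⊔ (c ⊓ a')) c (a'' ⊔ (c ⊓ b)) = a ⊔ (c ⊓ b) := by
  rw [med3_eq_sup_inf c (sup_le_sup ha (inf_le_inf_left c ha'))]
  apply le_antisymm
  · exact sup_le (sup_le le_sup_left (le_sup_of_le_right (inf_le_inf_left c ha')))
      (le_sup_of_le_right (inf_le_inf_left c (sup_le ha'' inf_le_right)))
  · exact sup_le (le_sup_of_le_left le_sup_left)
      (le_sup_of_le_right (le_inf inf_le_left le_sup_right))

end Median

section Tuples

variable {ι L : Type*} [DecidableEq ι]

def IsMedianDecomposableOn [Lattice L] [BoundedOrder L] (f : (ι → L) → L)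
    (S : Set (ι → L)) : Prop :=
  ∀ x ∈ S, ∀ k, f x = med3 (f (update x k ⊥)) (x k) (f (update x k ⊤))

lemma IsMedianDecomposableOn.mono [Lattice L] [BoundedOrder L] {f : (ι → L) → L}
    {S T : Set (ι → L)} (hT : IsMedianDecomposableOn f T) (hST : S ⊆ T) :
    IsMedianDecomposableOn f S :=
  fun x hx => hT x (hST hx)

def charTuple [Bot L] [Top L] (I : Finset ι) : ι → L := fun i => if i ∈ I then ⊤ else ⊥

def stepTuple [Bot L] [Top L] (A B : Finset ι) (c : L) : ι → L :=
  fun i => if i ∈ A then ⊤ else if i ∈ B then c else ⊥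

lemma charTuple_mono [Preorder L] [BoundedOrder L] :
    Monotone (charTuple : Finset ι → ι → L) := by
  intro A B h i
  by_cases hi : i ∈ A
  · simp [charTuple, hi, h hi]
  · simp [charTuple, hi]

variable [DistribLattice L] [BoundedOrder L] {f : (ι → L) → L}

lemma apply_stepTuple (hf : Monotone f) {c : L}
    (hmed : IsMedianDecomposableOn f (Set.univ.pi fun _ => {⊥, c, ⊤}))
    (A B : Finset ι) :
    f (stepTuple A B c) = f (charTuple A) ⊔ (c ⊓ f (charTuple (A ∪ B))) := by
  induction B using Finset.induction_on generalizing A with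
  | empty =>
    have : stepTuple A ∅ c = charTuple A := by funext i; simp [stepTuple, charTuple]
    rw [this, union_empty, sup_eq_left.2 inf_le_right]
  | @insert k B hkB ih =>
    by_cases hkA : k ∈ A
    · have hstep : stepTuple A (insert k B) c = stepTuple A B c := by
        funext i
        by_cases hik : i = k
        · simp [stepTuple, hik, hkA]
        · simp [stepTuple, hik]
      rw [hstep, union_insert, insert_eq_of_mem (mem_union_left B hkA), ih A]
    · set z := stepTuple A (insert k B) c
      have hz : z ∈ Set.univ.pi fun _ => ({⊥, c, ⊤} : Set L) := by
        intro i _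
        simp only [z, stepTuple]
        split_ifs <;> simp
      have hzk : z k = c := by simp [z, stepTuple, hkA]
      have hz_bot : update z k ⊥ = stepTuple A B c := by
        funext i
        by_cases hik : i = k
        · simp [stepTuple, hik, hkA, hkB]
        · simp [z, stepTuple, hik]
      have hz_top : update z k ⊤ = stepTuple (insert k A) B c := by
        funext i
        by_cases hik : i = k
        · simp [stepTuple, hik]
        · simp [z, stepTuple, hik]
      rw [hmed z hz k, hzk, hz_bot, hz_top, ih A, ih (insert k A), insert_union,
        ← union_insert]
      exact med3_sup_inf_sup_inf (hf (charTuple_mono (subset_insert k A)))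
        (hf (charTuple_mono (union_subset_union_right (subset_insert k B))))
        (hf (charTuple_mono (insert_subset (mem_union_right A (mem_insert_self k B))
          subset_union_left)))

lemma inf_inf_le_apply (hf : Monotone f)
    (hmed : ∀ c : L, IsMedianDecomposableOn f (Set.univ.pi fun _ => {⊥, c, ⊤}))
    (I : Finset ι) (x : ι → L) : f (charTuple I) ⊓ I.inf x ≤ f x := by
  have hx : stepTuple ∅ I (I.inf x) ≤ x := by
    intro i
    by_cases hi : i ∈ I
    · simpa [stepTuple, hi] using inf_le hi
    · simp [stepTuple, hi]
  calc f (charTuple I) ⊓ I.inf x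
      ≤ f (charTuple ∅) ⊔ (I.inf x ⊓ f (charTuple (∅ ∪ I))) := by
        rw [empty_union, inf_comm]
        exact le_sup_right
    _ = f (stepTuple ∅ I (I.inf x)) := (apply_stepTuple hf (hmed _) ∅ I).symm
    _ ≤ f x := hf hx

end Tuples

section Chain

variable {ι L : Type*} [Fintype ι] [DecidableEq ι] [LinearOrder L] [BoundedOrder L]
  {f : (ι → L) → L}

lemma apply_le_sup_inf (hf : Monotone f)
    (hmed : ∀ c : L, IsMedianDecomposableOn f (Set.univ.pi fun _ => {⊥, c, ⊤}))
    (x : ι → L) : f x ≤ univ.powerset.sup fun I => f (charTuple I) ⊓ I.inf x := by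
  set c := univ.powerset.sup fun I => f (charTuple I) ⊓ I.inf x
  rcases eq_or_ne c ⊤ with hc_top | hc_top
  · exact hc_top ▸ le_top
  set A := univ.filter fun i => c < x i
  have hxA : c < A.inf x := (Finset.lt_inf_iff hc_top.lt_top).2 fun i hi => (mem_filter.1 hi).2
  have hA : f (charTuple A) ≤ c :=
    (inf_le_iff.1 (le_sup (f := fun I => f (charTuple I) ⊓ I.inf x)
      (mem_powerset.2 (subset_univ A)))).resolve_right hxA.not_ge
  have hx : x ≤ stepTuple A univ c := by
    intro i
    by_cases hi : i ∈ A
    · simp [stepTuple, hi]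
    · have hxi : x i ≤ c := not_lt.1 (by simpa [A] using hi)
      simp [stepTuple, hi, hxi]
  calc f x ≤ f (stepTuple A univ c) := hf hx
    _ = f (charTuple A) ⊔ (c ⊓ f (charTuple (A ∪ univ))) := apply_stepTuple hf (hmed c) A univ
    _ ≤ c := sup_le hA inf_le_left

end Chain

lemma pi_subset_Lpq {L : Type*} [LinearOrder L] [BoundedOrder L] {n : ℕ} (c : L) :
    Set.univ.pi (fun _ : Fin n => ({⊥, c, ⊤} : Set L)) ⊆ Lpq L n 0 2 ∪ Lpq L n 1 3 := by
  intro x hx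
  set s := univ.image x
  have hs : s ⊆ insert c (s ∩ {⊥, ⊤}) := by
    intro v hv
    obtain ⟨i, -, rfl⟩ := mem_image.1 hv
    rcases hx i (Set.mem_univ i) with h | h | (h : x i = ⊤)
    · exact mem_insert_of_mem (mem_inter.2 ⟨hv, by simp [h]⟩)
    · simp [h]
    · exact mem_insert_of_mem (mem_inter.2 ⟨hv, by simp [h]⟩)
  have h3 : s.card ≤ 3 :=
    (card_le_card (t := {⊥, c, ⊤}) fun v hv => by
      obtain ⟨i, -, rfl⟩ := mem_image.1 hv
      simpa using hx i (Set.mem_univ i)).trans card_le_three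
  have h1 : s.card ≤ (s ∩ {⊥, ⊤}).card + 1 := (card_le_card hs).trans (card_insert_le _ _)
  rcases Nat.eq_zero_or_pos (s ∩ {⊥, ⊤}).card with h | h
  · exact Or.inl ⟨Nat.zero_le _, show s.card ≤ 2 by omega⟩
  · exact Or.inr ⟨h, h3⟩

/-- every nondecreasing weakly median decomposable function on a
bounded chain is a lattice polynomial function. -/
theorem stmt8 {L : Type*} [LinearOrder L] [BoundedOrder L] {n : ℕ}
    (f : (Fin n → L) → L) (hmono : Monotone f)
    (hmed : ∀ x ∈ Lpq L n 0 2 ∪ Lpq L n 1 3, ∀ k : Fin n,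
      f x = med3 (f (Function.update x k ⊥)) (x k) (f (Function.update x k ⊤))) :
    ∃ α : Finset (Fin n) → L, ∀ x,
      f x = (Finset.univ : Finset (Fin n)).powerset.sup (fun I => α I ⊓ I.inf x) := by
  have hmed' (c : L) : IsMedianDecomposableOn f (Set.univ.pi fun _ => {⊥, c, ⊤}) :=
    IsMedianDecomposableOn.mono hmed (pi_subset_Lpq c)
  exact ⟨fun I => f (charTuple I), fun x => le_antisymm (apply_le_sup_inf hmono hmed' x)
    (Finset.sup_le fun I _ => inf_inf_le_apply hmono hmed' I x)⟩
end

section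
/- Let L be a bounded chain. If a nondecreasing function f : L^n → L has a componentwise convex range, then f has a convex range, i.e., the range of f equals the interval [f(0,...,0), f(1,...,1)]. -/
/-- on a bounded chain, a nondecreasing function with a componentwise
convex range has a convex range, namely the interval [f(0,...,0), f(1,...,1)]. -/
theorem stmt9 {L : Type*} [LinearOrder L] [BoundedOrder L] {n : ℕ}
    (f : (Fin n → L) → L) (hmono : Monotone f)
    (h : (n = 1 ∧ (Set.range f).OrdConnected) ∨
         (1 < n ∧ ∀ (a : Fin n → L) (k : Fin n),
            (Set.range fun x => f (Function.update a k x)).OrdConnected)) :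
    Set.range f = Set.Icc (f fun _ => ⊥) (f fun _ => ⊤) := by
  apply Set.Subset.antisymm
  · rintro _ ⟨x, rfl⟩
    exact ⟨hmono fun j => bot_le, hmono fun j => le_top⟩
  · intro y hy
    rcases h with ⟨-, hcc⟩ | ⟨-, hcc⟩
    · exact hcc.out (Set.mem_range_self _) (Set.mem_range_self _) hy
    · set a : ℕ → (Fin n → L) := fun i j => if (j : ℕ) < i then ⊤ else ⊥ with ha
      have ha0 : a 0 = fun _ => ⊥ := by funext j; simp [ha]
      have han : a n = fun _ => ⊤ := by funext j; simp [ha, j.isLt]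
      have key : ∀ m i, i + m = n → f (a i) ≤ y → y ∈ Set.range f := by
        intro m
        induction m with
        | zero =>
          intro i hi hle
          have hin : i = n := by omega
          have : a i = fun _ => ⊤ := by rw [hin, han]
          exact ⟨a i, le_antisymm hle (this ▸ hy.2)⟩
        | succ m ih =>
          intro i hi hle
          have hin : i < n := by omega
          rcases le_total y (f (a (i + 1))) with hle' | hle'
          · have e1 : Function.update (a i) ⟨i, hin⟩ ⊥ = a i := by
              funext j
              rcases eq_or_ne j ⟨i, hin⟩ with rfl | hj
              · simp [ha]
              · simp [Function.update_of_ne hj]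
            have e2 : Function.update (a i) ⟨i, hin⟩ ⊤ = a (i + 1) := by
              funext j
              rcases eq_or_ne j ⟨i, hin⟩ with rfl | hj
              · simp [ha]
              · have : (j : ℕ) ≠ i := fun hji => hj (Fin.ext hji)
                simp only [Function.update_of_ne hj, ha]
                have : (j : ℕ) < i + 1 ↔ (j : ℕ) < i := by omega
                simp [this]
            obtain ⟨x, hx⟩ := (hcc (a i) ⟨i, hin⟩).out
              ⟨⊥, congrArg f e1⟩ ⟨⊤, congrArg f e2⟩ ⟨hle, hle'⟩
            exact ⟨_, hx⟩
          · exact ih (i + 1) (by omega) hle'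
      exact key n 0 (by omega) (ha0 ▸ hy.1)
end

section
/- Let L be a bounded chain. If f : L^n → L is comonotonic minitive (or comonotonic maxitive), then f is nondecreasing. -/
/-- Two vectors are comonotonic if they lie in a common standard simplex. -/
def Comonotone {L : Type*} [LinearOrder L] {n : ℕ} (x y : Fin n → L) : Prop :=
  ∃ σ : Equiv.Perm (Fin n), Monotone (x ∘ σ) ∧ Monotone (y ∘ σ)

section aux

variable {L : Type*} [LinearOrder L] {n : ℕ}

/-- Key comonotonicity lemma: for `x ≤ y` and a "gap" `a ≤ b` (no coordinate values
strictly between), the truncations `x ⊔ (y ⊓ a)` and `x ⊔ (y ⊓ b)` are comonotone. -/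
lemma comono_trunc (x y : Fin n → L) (hxy : x ≤ y) (a b : L) (hab : a ≤ b)
    (hx : ∀ j, x j ≤ a ∨ b ≤ x j) (hy : ∀ j, y j ≤ a ∨ b ≤ y j) :
    Comonotone (fun j => x j ⊔ (y j ⊓ a)) (fun j => x j ⊔ (y j ⊓ b)) := by
  set za : Fin n → L := fun j => x j ⊔ (y j ⊓ a) with hza
  set zb : Fin n → L := fun j => x j ⊔ (y j ⊓ b) with hzb
  have hcase : ∀ j, (za j = zb j ∧ (za j ≤ a ∨ b ≤ za j)) ∨ (za j = a ∧ zb j = b) := by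
    intro j
    rcases hy j with h1 | h1
    · left
      have e1 : za j = y j := by
        simp only [hza]; rw [inf_eq_left.mpr h1, sup_eq_right.mpr (hxy j)]
      have e2 : zb j = y j := by
        simp only [hzb]; rw [inf_eq_left.mpr (h1.trans hab), sup_eq_right.mpr (hxy j)]
      exact ⟨e1.trans e2.symm, Or.inl (e1 ▸ h1)⟩
    · rcases hx j with h2 | h2
      · right
        constructor
        · simp only [hza]
          rw [inf_eq_right.mpr (hab.trans h1), sup_eq_right.mpr h2]
        · simp only [hzb]
          rw [inf_eq_right.mpr h1, sup_eq_right.mpr (h2.trans hab)]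
      · left
        have e1 : za j = x j := by
          simp only [hza]
          rw [sup_eq_left.mpr (le_trans inf_le_right (le_trans hab h2))]
        have e2 : zb j = x j := by
          simp only [hzb]
          rw [sup_eq_left.mpr (le_trans inf_le_right h2)]
        exact ⟨e1.trans e2.symm, Or.inr (e1 ▸ h2)⟩
  have hS : ∀ j k, zb j < zb k → za j ≤ za k := by
    intro j k hlt
    rcases hcase j with ⟨e1, h1 | h1⟩ | ⟨e1a, e1b⟩ <;>
      rcases hcase k with ⟨e2, _⟩ | ⟨e2a, e2b⟩
    · rw [e1, e2]; exact hlt.le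
    · rw [e2a]; exact e1 ▸ h1
    · rw [e1, e2]; exact hlt.le
    · have hb : b ≤ zb j := e1 ▸ h1
      exact absurd (hlt.trans_le e2b.le) (not_lt.mpr hb)
    · rw [e1a]; exact le_trans hab (le_of_lt (e1b ▸ e2 ▸ hlt))
    · exact absurd (e1b ▸ e2b ▸ hlt) (lt_irrefl _)
  -- sort the lexicographic pair (zb, za)
  set w : Fin n → L ×ₗ L := fun j => toLex (zb j, za j) with hw
  refine ⟨Tuple.sort w, ?_, ?_⟩
  · intro j k hjk
    have h := Tuple.monotone_sort w hjk
    rw [Function.comp_apply, Function.comp_apply, hw, Prod.Lex.le_iff] at h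
    rcases h with h | ⟨_, h⟩
    · exact hS _ _ h
    · exact h
  · intro j k hjk
    have h := Tuple.monotone_sort w hjk
    rw [Function.comp_apply, Function.comp_apply, hw, Prod.Lex.le_iff] at h
    rcases h with h | ⟨h, _⟩
    · exact h.le
    · exact h.le

variable [BoundedOrder L]

/-- A comonotonic minitive function is monotone. -/
lemma monotone_of_comono_min (f : (Fin n → L) → L)
    (hf : ∀ x y, Comonotone x y → f (x ⊓ y) = f x ⊓ f y) : Monotone f := by
  intro x y hxy
  set V : Finset L := insert ⊤ ((Finset.univ.image x) ∪ (Finset.univ.image y)) with hV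
  have hxV : ∀ j, x j ∈ V := fun j => by
    simp [hV, Finset.mem_insert, Finset.mem_union, Finset.mem_image]
  have hyV : ∀ j, y j ∈ V := fun j => by
    simp [hV, Finset.mem_insert, Finset.mem_union, Finset.mem_image]
  have htV : (⊤ : L) ∈ V := by simp [hV]
  set z : L → (Fin n → L) := fun a j => x j ⊔ (y j ⊓ a) with hz
  -- single step
  have step : ∀ a b : L, a ≤ b → (∀ j, x j ≤ a ∨ b ≤ x j) → (∀ j, y j ≤ a ∨ b ≤ y j) →
      f (z a) ≤ f (z b) := by
    intro a b hab hxg hyg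
    have hcom := comono_trunc x y hxy a b hab hxg hyg
    have hle : z a ≤ z b := fun j =>
      sup_le_sup_left (inf_le_inf_left _ hab) _
    have heq : z a ⊓ z b = z a := inf_eq_left.mpr hle
    have := hf (z a) (z b) hcom
    rw [heq] at this
    exact le_of_eq_of_le this inf_le_right
  -- induction along V
  have main : ∀ N : ℕ, ∀ a : L, (V.filter (fun c => a < c)).card ≤ N → f (z a) ≤ f (z ⊤) := by
    intro N
    induction N with
    | zero =>
      intro a hcard
      have hempty : V.filter (fun c => a < c) = ∅ := Finset.card_eq_zero.mp (Nat.le_zero.mp hcard)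
      have : ¬ a < ⊤ := by
        intro hlt
        have : (⊤ : L) ∈ V.filter (fun c => a < c) := Finset.mem_filter.mpr ⟨htV, hlt⟩
        rw [hempty] at this; exact absurd this (Finset.notMem_empty _)
      have : a = ⊤ := top_le_iff.mp (not_lt.mp this)
      rw [this]
    | succ N ih =>
      intro a hcard
      by_cases ha : a = ⊤
      · rw [ha]
      · have halt : a < ⊤ := lt_top_iff_ne_top.mpr ha
        have hne : (V.filter (fun c => a < c)).Nonempty :=
          ⟨⊤, Finset.mem_filter.mpr ⟨htV, halt⟩⟩
        set b := (V.filter (fun c => a < c)).min' hne with hb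
        have hbmem := (V.filter (fun c => a < c)).min'_mem hne
        have hbV : b ∈ V := (Finset.mem_filter.mp hbmem).1
        have hab : a < b := (Finset.mem_filter.mp hbmem).2
        have hgap : ∀ c : L, c ∈ V → c ≤ a ∨ b ≤ c := by
          intro c hc
          rcases le_or_gt c a with h | h
          · exact Or.inl h
          · exact Or.inr (Finset.min'_le _ _ (Finset.mem_filter.mpr ⟨hc, h⟩))
        have hstep := step a b hab.le (fun j => hgap _ (hxV j)) (fun j => hgap _ (hyV j))
        have hsub : V.filter (fun c => b < c) ⊂ V.filter (fun c => a < c) := by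
          refine Finset.ssubset_iff_of_subset ?_ |>.mpr ⟨b, hbmem, by simp⟩
          intro c hc
          have := Finset.mem_filter.mp hc
          exact Finset.mem_filter.mpr ⟨this.1, hab.trans this.2⟩
        have hlt : (V.filter (fun c => b < c)).card < N + 1 :=
          lt_of_lt_of_le (Finset.card_lt_card hsub) hcard
        exact hstep.trans (ih b (Nat.lt_succ_iff.mp hlt))
  have h0 : z ⊥ = x := by funext j; simp [hz]
  have h1 : z ⊤ = y := by funext j; simp [hz, sup_eq_right.mpr (hxy j)]
  have := main (V.filter (fun c => ⊥ < c)).card ⊥ le_rfl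
  rwa [h0, h1] at this

/-- Comonotonicity is preserved under order dualization. -/
lemma comonotone_ofDual {x y : Fin n → Lᵒᵈ}
    (h : Comonotone x y) :
    Comonotone (fun j => OrderDual.ofDual (x j)) (fun j => OrderDual.ofDual (y j)) := by
  obtain ⟨σ, hx, hy⟩ := h
  refine ⟨(Fin.revPerm).trans σ, ?_, ?_⟩
  · intro j k hjk
    exact hx (show Fin.revPerm k ≤ Fin.revPerm j from Fin.rev_le_rev.mpr hjk)
  · intro j k hjk
    exact hy (show Fin.revPerm k ≤ Fin.revPerm j from Fin.rev_le_rev.mpr hjk)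

end aux

/-- a comonotonic minitive (or comonotonic maxitive) function on a
bounded chain is nondecreasing. -/
theorem stmt10 {L : Type*} [LinearOrder L] [BoundedOrder L] {n : ℕ}
    (f : (Fin n → L) → L)
    (h : (∀ x y, Comonotone x y → f (x ⊓ y) = f x ⊓ f y) ∨
         (∀ x y, Comonotone x y → f (x ⊔ y) = f x ⊔ f y)) :
    Monotone f := by
  rcases h with h | h
  · exact monotone_of_comono_min f h
  · -- dualize
    set g : (Fin n → Lᵒᵈ) → Lᵒᵈ :=
      fun x => OrderDual.toDual (f (fun j => OrderDual.ofDual (x j))) with hg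
    have hgmin : ∀ x y : Fin n → Lᵒᵈ, Comonotone x y → g (x ⊓ y) = g x ⊓ g y := by
      intro x y hcom
      have := h (fun j => OrderDual.ofDual (x j)) (fun j => OrderDual.ofDual (y j))
        (comonotone_ofDual hcom)
      simp only [hg]
      rw [show (fun j => OrderDual.ofDual ((x ⊓ y) j)) =
        (fun j => OrderDual.ofDual (x j)) ⊔ (fun j => OrderDual.ofDual (y j)) from rfl]
      exact congrArg OrderDual.toDual this
    have hgmono := monotone_of_comono_min g hgmin
    intro x y hxy
    exact hgmono (show (fun j => OrderDual.toDual (y j)) ≤ fun j => OrderDual.toDual (x j) from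
      fun j => hxy j)
end

section
/- Let L be a bounded chain and S a nonempty subset of L. If f : L^n → L is comonotonic minitive, then f is horizontally S-minitive: f(x) = f(x ∨ c) ∧ f([x]^c) for every x ∈ L^n and c ∈ S. Moreover, if f is additionally S-idempotent, then f is S-min homogeneous: f(x ∧ c) = f(x) ∧ c for all x ∈ L^n, c ∈ S. -/
section

variable {L : Type*} [LinearOrder L] {n : ℕ}

/-- Sorting `x` puts `g ∘ x` and `h ∘ x` in order simultaneously. -/
theorem comonotone_comp_of_monotone {g h : L → L} (hg : Monotone g) (hh : Monotone h)
    (x : Fin n → L) : Comonotone (g ∘ x) (h ∘ x) :=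
  ⟨Tuple.sort x, hg.comp (Tuple.monotone_sort x), hh.comp (Tuple.monotone_sort x)⟩

theorem monotone_ite_le_top [OrderTop L] (c : L) :
    Monotone fun t : L => if c ≤ t then ⊤ else t := by
  intro s t hst
  dsimp only
  split_ifs with hs ht
  · exact le_rfl
  · exact absurd (hs.trans hst) ht
  · exact le_top
  · exact hst

theorem sup_inf_ite_le_top [OrderTop L] (c t : L) :
    (t ⊔ c) ⊓ (if c ≤ t then ⊤ else t) = t := by
  split_ifs with h
  · rw [inf_top_eq, sup_of_le_left h]
  · exact inf_of_le_right le_sup_left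

end

theorem stmt12_general {L : Type*} [LinearOrder L] [BoundedOrder L] {n : ℕ}
    (S : Set L) (f : (Fin n → L) → L)
    (hcm : ∀ x y, Comonotone x y → f (x ⊓ y) = f x ⊓ f y) :
    (∀ (x : Fin n → L), ∀ c ∈ S,
        f x = f (fun i => x i ⊔ c) ⊓ f (fun i => if c ≤ x i then ⊤ else x i)) ∧
    ((∀ c ∈ S, f (fun _ => c) = c) →
      ∀ (x : Fin n → L), ∀ c ∈ S, f (fun i => x i ⊓ c) = f x ⊓ c) := by
  refine ⟨fun x c _ => ?_, fun hid x c hc => ?_⟩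
  · have hmin := hcm (fun i => x i ⊔ c) (fun i => if c ≤ x i then ⊤ else x i)
      (comonotone_comp_of_monotone (monotone_id.sup monotone_const) (monotone_ite_le_top c) x)
    rwa [show (fun i => x i ⊔ c) ⊓ (fun i => if c ≤ x i then ⊤ else x i) = x from
      funext fun i => sup_inf_ite_le_top c (x i)] at hmin
  · have hmin := hcm x (fun _ => c) (comonotone_comp_of_monotone monotone_id monotone_const x)
    rwa [hid c hc] at hmin

/-- a comonotonic minitive function is horizontally S-minitive, and
if moreover it is S-idempotent then it is S-min homogeneous. -/
theorem stmt12 {L : Type*} [LinearOrder L] [BoundedOrder L] {n : ℕ}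
    (S : Set L) (hS : S.Nonempty) (f : (Fin n → L) → L)
    (hcm : ∀ x y, Comonotone x y → f (x ⊓ y) = f x ⊓ f y) :
    (∀ (x : Fin n → L), ∀ c ∈ S,
        f x = f (fun i => x i ⊔ c) ⊓ f (fun i => if c ≤ x i then ⊤ else x i)) ∧
    ((∀ c ∈ S, f (fun _ => c) = c) →
      ∀ (x : Fin n → L), ∀ c ∈ S, f (fun i => x i ⊓ c) = f x ⊓ c) :=
  stmt12_general S f hcm
end

section
/- Let L be a bounded chain and f : L^n → L a function that is R̄_f-idempotent, comonotonic minitive, and comonotonic maxitive. Then f is a lattice polynomial function, i.e., f(x) = ⋁_{I⊆[n]}(α(I) ∧ ⋀_{i∈I} x_i) for some α : 2^{[n]} → L. -/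
open Finset

section

variable {L : Type*} [LinearOrder L] {n : ℕ}

theorem comonotone_of_lt_imp_le {x y : Fin n → L} (h : ∀ i j, x i < x j → y i ≤ y j) :
    Comonotone x y := by
  have hsort := Tuple.monotone_sort fun i => toLex (x i, y i)
  refine ⟨Tuple.sort fun i => toLex (x i, y i), fun p q hpq => ?_, fun p q hpq => ?_⟩ <;>
    rcases Prod.Lex.toLex_le_toLex.1 (hsort hpq) with hlt | ⟨heq, hle⟩
  · exact hlt.le
  · exact heq.le
  · exact h _ _ hlt
  · exact hle

theorem comonotone_const_left (c : L) (x : Fin n → L) : Comonotone (fun _ => c) x :=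
  comonotone_of_lt_imp_le fun _ _ h => absurd h (lt_irrefl c)

theorem comonotone_const_right (x : Fin n → L) (c : L) : Comonotone x (fun _ => c) :=
  comonotone_of_lt_imp_le fun _ _ _ => le_rfl

def ComonotoneMinitive (f : (Fin n → L) → L) : Prop :=
  ∀ x y, Comonotone x y → f (x ⊓ y) = f x ⊓ f y

def ComonotoneMaxitive (f : (Fin n → L) → L) : Prop :=
  ∀ x y, Comonotone x y → f (x ⊔ y) = f x ⊔ f y

variable {f : (Fin n → L) → L}

theorem ComonotoneMinitive.map_le_of_le (hmin : ComonotoneMinitive f) {x y : Fin n → L}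
    (hxy : Comonotone x y) (h : x ≤ y) : f x ≤ f y := by
  rw [← inf_eq_left.2 h, hmin x y hxy]
  exact inf_le_right

variable [BoundedOrder L]

def charVec (I : Finset (Fin n)) : Fin n → L := fun i => if i ∈ I then ⊤ else ⊥

theorem comonotone_charVec {I J : Finset (Fin n)} (hIJ : I ⊆ J) :
    Comonotone (charVec I : Fin n → L) (charVec J) := by
  refine comonotone_of_lt_imp_le fun i j hlt => ?_
  have hj : j ∈ I := by
    by_contra hj
    simp [charVec, hj] at hlt
  simp [charVec, hIJ hj]

theorem eq_sup_const_inf_charVec (x : Fin n → L) :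
    x = univ.sup fun i => (fun _ => x i) ⊓ charVec {j | x i ≤ x j} := by
  ext j
  rw [Finset.sup_apply]
  refine le_antisymm (le_sup_of_le (mem_univ j) (by simp [charVec])) (Finset.sup_le fun i _ => ?_)
  by_cases hij : x i ≤ x j <;> simp [charVec, hij]

theorem sup_powerset_inf_eq {ι : Type*} [Fintype ι] {α : Finset ι → L}
    (hα : Monotone α) (x : ι → L) :
    (univ.powerset.sup fun I => α I ⊓ I.inf x) =
      α ∅ ⊔ univ.sup fun i => x i ⊓ α {j | x i ≤ x j} := by
  apply le_antisymm
  · refine Finset.sup_le fun I _ => ?_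
    rcases I.eq_empty_or_nonempty with rfl | hI
    · exact le_sup_of_le_left inf_le_left
    obtain ⟨i, hi, hmin⟩ := I.exists_min_image x hI
    have hsub : I ⊆ ({j | x i ≤ x j} : Finset ι) := fun j hj => by simpa using hmin j hj
    calc α I ⊓ I.inf x ≤ x i ⊓ α {j | x i ≤ x j} :=
          inf_comm (α I) _ ▸ inf_le_inf (inf_le hi) (hα hsub)
      _ ≤ _ := le_sup_of_le_right (le_sup (f := fun i => x i ⊓ α {j | x i ≤ x j}) (mem_univ i))
  · refine sup_le ?_ (Finset.sup_le fun i _ => ?_)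
    · simpa using le_sup (f := fun I => α I ⊓ I.inf x) (empty_mem_powerset univ)
    · have hinf : ({j | x i ≤ x j} : Finset ι).inf x = x i :=
        le_antisymm (inf_le (by simp)) (Finset.le_inf fun j hj => by simpa using hj)
      calc x i ⊓ α {j | x i ≤ x j}
          = α {j | x i ≤ x j} ⊓ ({j | x i ≤ x j} : Finset ι).inf x := by rw [hinf, inf_comm]
        _ ≤ _ := le_sup (f := fun I => α I ⊓ I.inf x) (mem_powerset.2 (subset_univ _))

theorem ComonotoneMinitive.map_bot_le (hmin : ComonotoneMinitive f) (x : Fin n → L) :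
    f ⊥ ≤ f x :=
  hmin.map_le_of_le (comonotone_const_left ⊥ x) bot_le

theorem ComonotoneMinitive.map_le_map_top (hmin : ComonotoneMinitive f) (x : Fin n → L) :
    f x ≤ f ⊤ :=
  hmin.map_le_of_le (comonotone_const_right x ⊤) le_top

theorem ComonotoneMinitive.monotone_map_charVec (hmin : ComonotoneMinitive f) :
    Monotone fun I => f (charVec I) := fun I J hIJ =>
  hmin.map_le_of_le (comonotone_charVec hIJ) fun i => by
    by_cases hi : i ∈ I
    · simp [charVec, hi, hIJ hi]
    · simp [charVec, hi]

theorem ComonotoneMaxitive.map_finset_sup (hmax : ComonotoneMaxitive f) {ι : Type*}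
    (σ : Equiv.Perm (Fin n)) (s : Finset ι) {g : ι → Fin n → L}
    (hg : ∀ i ∈ s, Monotone (g i ∘ σ)) : f (s.sup g) = f ⊥ ⊔ s.sup (f ∘ g) := by
  induction s using Finset.cons_induction with
  | empty => simp
  | cons i s hi ih =>
    have hs : Monotone (s.sup g ∘ σ) :=
      Finset.sup_induction (p := fun y => Monotone (y ∘ σ)) (fun _ _ _ => le_rfl)
        (fun _ h₁ _ h₂ => h₁.sup h₂) fun j hj => hg j (mem_cons_of_mem hj)
    rw [sup_cons, sup_cons, hmax _ _ ⟨σ, hg i (mem_cons_self i s), hs⟩,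
      ih fun j hj => hg j (mem_cons_of_mem hj)]
    exact sup_left_comm _ _ _

theorem map_const
    (hfix : ∀ c, f ⊥ ≤ c → c ≤ f ⊤ → f (fun _ => c) = c)
    (hmin : ComonotoneMinitive f) (hmax : ComonotoneMaxitive f) (c : L) :
    f (fun _ => c) = (c ⊔ f ⊥) ⊓ f ⊤ := by
  have hab : f ⊥ ≤ f ⊤ := hmin.map_bot_le ⊤
  have hsplit : f (fun _ => (c ⊔ f ⊥) ⊓ f ⊤) = (f (fun _ => c) ⊔ f ⊥) ⊓ f ⊤ := by
    change f (((fun _ => c) ⊔ fun _ => f ⊥) ⊓ fun _ => f ⊤) = _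
    rw [hmin _ _ (comonotone_const_right _ _), hmax _ _ (comonotone_const_right _ _),
      hfix _ le_rfl hab, hfix _ hab le_rfl]
  rw [hfix _ (le_inf le_sup_right hab) inf_le_right, sup_eq_left.2 (hmin.map_bot_le _),
    inf_eq_left.2 (hmin.map_le_map_top _)] at hsplit
  exact hsplit.symm

theorem map_const_inf_charVec
    (hfix : ∀ c, f ⊥ ≤ c → c ≤ f ⊤ → f (fun _ => c) = c)
    (hmin : ComonotoneMinitive f) (hmax : ComonotoneMaxitive f) (c : L) (U : Finset (Fin n)) :
    f ((fun _ => c) ⊓ charVec U) = f ⊥ ⊔ (c ⊓ f (charVec U)) := by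
  rw [hmin _ _ (comonotone_const_left _ _), map_const hfix hmin hmax, inf_assoc,
    inf_eq_right.2 (hmin.map_le_map_top _), inf_sup_right, inf_eq_left.2 (hmin.map_bot_le _),
    sup_comm]

theorem map_eq_sup
    (hfix : ∀ c, f ⊥ ≤ c → c ≤ f ⊤ → f (fun _ => c) = c)
    (hmin : ComonotoneMinitive f) (hmax : ComonotoneMaxitive f) (x : Fin n → L) :
    f x = f ⊥ ⊔ univ.sup fun i => x i ⊓ f (charVec {j | x i ≤ x j}) := by
  have hsorted : ∀ i, Monotone (((fun _ => x i) ⊓ charVec {j | x i ≤ x j}) ∘ Tuple.sort x) :=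
    fun i p q hpq => by
      have hx : x (Tuple.sort x p) ≤ x (Tuple.sort x q) := Tuple.monotone_sort x hpq
      by_cases hp : x i ≤ x (Tuple.sort x p)
      · simp [charVec, hp, hp.trans hx]
      · simp [charVec, hp]
  conv_lhs => rw [eq_sup_const_inf_charVec x,
    hmax.map_finset_sup (Tuple.sort x) univ fun i _ => hsorted i]
  simp only [Function.comp_def, map_const_inf_charVec hfix hmin hmax]
  change f ⊥ ⊔ (univ : Finset (Fin n)).sup
    ((fun _ => f ⊥) ⊔ fun i => x i ⊓ f (charVec {j | x i ≤ x j})) = _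
  rw [Finset.sup_sup, ← sup_assoc, sup_eq_left.2 sup_const_le]

end

/-- an R̄_f-idempotent, comonotonic minitive and comonotonic maxitive
function on a bounded chain is a lattice polynomial function. (R̄_f is the convex
hull of the range: c ∈ R̄_f iff a ≤ c ≤ b for some a, b in the range.) -/
theorem stmt13 {L : Type*} [LinearOrder L] [BoundedOrder L] {n : ℕ}
    (f : (Fin n → L) → L)
    (hid : ∀ c : L, (∃ a ∈ Set.range f, ∃ b ∈ Set.range f, a ≤ c ∧ c ≤ b) →
      f (fun _ => c) = c)
    (hmin : ∀ x y, Comonotone x y → f (x ⊓ y) = f x ⊓ f y)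
    (hmax : ∀ x y, Comonotone x y → f (x ⊔ y) = f x ⊔ f y) :
    ∃ α : Finset (Fin n) → L, ∀ x,
      f x = (Finset.univ : Finset (Fin n)).powerset.sup (fun I => α I ⊓ I.inf x) := by
  refine ⟨fun I => f (charVec I), fun x => ?_⟩
  have hbot : f (charVec ∅) = f ⊥ := congrArg f (funext fun _ => if_neg (notMem_empty _))
  have hfix : ∀ c, f ⊥ ≤ c → c ≤ f ⊤ → f (fun _ => c) = c := fun c hbc hct =>
    hid c ⟨_, ⟨⊥, rfl⟩, _, ⟨⊤, rfl⟩, hbc, hct⟩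
  rw [sup_powerset_inf_eq (ComonotoneMinitive.monotone_map_charVec hmin), hbot,
    map_eq_sup hfix hmin hmax]
end

section
/- Let L be a bounded chain. Every lattice polynomial function f : L^n → L is comonotonic maxitive and comonotonic minitive. -/
def latticePoly {L : Type*} [LinearOrder L] [BoundedOrder L] {n : ℕ}
    (α : Finset (Fin n) → L) (x : Fin n → L) : L :=
  (Finset.univ : Finset (Fin n)).powerset.sup fun I => α I ⊓ I.inf x

namespace Comonotone

variable {L : Type*} [LinearOrder L] {n : ℕ} {x y : Fin n → L}

theorem apply_le_total (h : Comonotone x y) (i j : Fin n) :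
    (x i ≤ x j ∧ y i ≤ y j) ∨ (x j ≤ x i ∧ y j ≤ y i) := by
  obtain ⟨σ, hx, hy⟩ := h
  rcases le_total (σ.symm i) (σ.symm j) with hij | hji
  · left
    simpa using And.intro (hx hij) (hy hij)
  · right
    simpa using And.intro (hx hji) (hy hji)

section OrderTop

variable [OrderTop L]

theorem exists_mem_inf_eq (h : Comonotone x y) {I : Finset (Fin n)} (hI : I.Nonempty) :
    ∃ i ∈ I, I.inf x = x i ∧ I.inf y = y i := by
  obtain ⟨i, hi, hxi⟩ := I.exists_mem_eq_inf hI x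
  obtain ⟨k, hk, hyk⟩ := I.exists_mem_eq_inf hI y
  rcases h.apply_le_total i k with ⟨-, hyik⟩ | ⟨hxki, -⟩
  · exact ⟨i, hi, hxi, le_antisymm (Finset.inf_le hi) (hyk ▸ hyik)⟩
  · exact ⟨k, hk, le_antisymm (Finset.inf_le hk) (hxi ▸ hxki), hyk⟩

theorem finset_inf_sup (h : Comonotone x y) (I : Finset (Fin n)) :
    I.inf (x ⊔ y) = I.inf x ⊔ I.inf y := by
  rcases I.eq_empty_or_nonempty with rfl | hI
  · simp
  obtain ⟨i, hi, hxi, hyi⟩ := h.exists_mem_inf_eq hI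
  refine le_antisymm ?_ (sup_le ?_ ?_)
  · rw [hxi, hyi]
    exact Finset.inf_le (f := x ⊔ y) hi
  · exact Finset.inf_mono_fun fun j _ => le_sup_left
  · exact Finset.inf_mono_fun fun j _ => le_sup_right

theorem finset_inf_le_total (h : Comonotone x y) (I J : Finset (Fin n)) :
    (I.inf x ≤ J.inf x ∧ I.inf y ≤ J.inf y) ∨
      (J.inf x ≤ I.inf x ∧ J.inf y ≤ I.inf y) := by
  rcases I.eq_empty_or_nonempty with rfl | hI
  · simp
  rcases J.eq_empty_or_nonempty with rfl | hJ
  · simp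
  obtain ⟨i, -, hxi, hyi⟩ := h.exists_mem_inf_eq hI
  obtain ⟨j, -, hxj, hyj⟩ := h.exists_mem_inf_eq hJ
  rw [hxi, hyi, hxj, hyj]
  exact h.apply_le_total i j

end OrderTop

variable [BoundedOrder L]

theorem latticePoly_sup (h : Comonotone x y) (α : Finset (Fin n) → L) :
    latticePoly α (x ⊔ y) = latticePoly α x ⊔ latticePoly α y := by
  simp only [latticePoly, h.finset_inf_sup, inf_sup_left]
  exact Finset.sup_sup

theorem latticePoly_inf (h : Comonotone x y) (α : Finset (Fin n) → L) :
    latticePoly α (x ⊓ y) = latticePoly α x ⊓ latticePoly α y := by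
  refine le_antisymm (le_inf ?_ ?_) ?_
  · exact Finset.sup_mono_fun fun I _ =>
      inf_le_inf_left _ (Finset.inf_mono_fun fun _ _ => inf_le_left)
  · exact Finset.sup_mono_fun fun I _ =>
      inf_le_inf_left _ (Finset.inf_mono_fun fun _ _ => inf_le_right)
  simp only [latticePoly, Finset.sup_inf_sup, Finset.inf_inf]
  refine Finset.sup_le fun ⟨I, J⟩ hIJ => ?_
  obtain ⟨hI, hJ⟩ := Finset.mem_product.mp hIJ
  rcases h.finset_inf_le_total I J with ⟨hx, -⟩ | ⟨-, hy⟩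
  · refine Finset.le_sup_of_le hJ (le_inf (inf_le_right.trans inf_le_left) (le_inf ?_ ?_))
    · exact inf_le_left.trans (inf_le_right.trans hx)
    · exact inf_le_right.trans inf_le_right
  · refine Finset.le_sup_of_le hI (le_inf (inf_le_left.trans inf_le_left) (le_inf ?_ ?_))
    · exact inf_le_left.trans inf_le_right
    · exact inf_le_right.trans (inf_le_right.trans hy)

end Comonotone

/-- every lattice polynomial function on a bounded chain is
comonotonic maxitive and comonotonic minitive. -/
theorem stmt14 {L : Type*} [LinearOrder L] [BoundedOrder L] {n : ℕ}
    (f : (Fin n → L) → L) (α : Finset (Fin n) → L)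
    (hf : ∀ x, f x = (Finset.univ : Finset (Fin n)).powerset.sup
      (fun I => α I ⊓ I.inf x)) :
    (∀ x y, Comonotone x y → f (x ⊔ y) = f x ⊔ f y) ∧
    (∀ x y, Comonotone x y → f (x ⊓ y) = f x ⊓ f y) := by
  obtain rfl : f = latticePoly α := funext hf
  exact ⟨fun x y h => h.latticePoly_sup α, fun x y h => h.latticePoly_inf α⟩
end

section
/- Let L be a bounded chain and f : L^n → L a lattice polynomial function given by f(x) = ⋁_{I⊆[n]}(α_f(I) ∧ ⋀_{i∈I} x_i) where α_f(I) = f(e_I). Then for every permutation σ of [n] and every x ∈ L^n with x_{σ(1)} ≤ ... ≤ x_{σ(n)}, setting x_{σ(0)} = 0 and x_{σ(n+1)} = 1 and S^↑_σ(i) = {σ(i), ..., σ(n)} (with S^↑_σ(n+1) = ∅), we have f(x) = ⋁_{i ∈ [n+1]} (α_f(S^↑_σ(i)) ∧ x_{σ(i)}). -/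
/-!
Monotonicity of the disjunctive normal form makes `f` monotone, hence `I ↦ α_f(I)` too. On the
simplex of `σ` the meet of `x` over the upper slice `S↑_σ(k)` is just `x_{σ(k)}` (or `1` for the
empty slice). Every term `α_f(I) ∧ ⋀_{i∈I} x_i` is then dominated by the term of the slice
starting at the `σ`-least element of `I`, since `I` lies in that slice and both meets are equal;
conversely the slice terms occur among the terms of the normal form.
-/

open Finset

section NormalForm

variable {ι L : Type*} [DecidableEq ι] [Lattice L] [BoundedOrder L]

def indicatorVec (I : Finset ι) : ι → L := fun i => if i ∈ I then ⊤ else ⊥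

theorem indicatorVec_mono : Monotone (indicatorVec : Finset ι → ι → L) := by
  intro I J hIJ i
  by_cases hi : i ∈ I
  · simp [indicatorVec, hi, hIJ hi]
  · simp [indicatorVec, hi]

def HasDNF [Fintype ι] (f : (ι → L) → L) : Prop :=
  ∀ x, f x = (univ : Finset ι).powerset.sup fun I => f (indicatorVec I) ⊓ I.inf x

theorem HasDNF.monotone [Fintype ι] {f : (ι → L) → L} (hf : HasDNF f) : Monotone f := by
  intro x y hxy
  rw [hf x, hf y]
  exact sup_mono_fun fun I _ => inf_le_inf_left _ (inf_mono_fun fun i _ => hxy i)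

end NormalForm

section Simplex

variable {L : Type*} [Lattice L] [BoundedOrder L] {n : ℕ} (σ : Equiv.Perm (Fin n))

/-- The paper's `S↑_σ(k+1) = {σ(k+1), …, σ(n)}`: indices are shifted to start at `0`. -/
def upperSlice (k : ℕ) : Finset (Fin n) := univ.filter fun i => k ≤ (σ.symm i : ℕ)

theorem indicatorVec_upperSlice (k : ℕ) :
    indicatorVec (upperSlice σ k) = fun i => if k ≤ (σ.symm i : ℕ) then (⊤ : L) else ⊥ := by
  ext i
  simp [indicatorVec, upperSlice]

variable {σ}

theorem upperSlice_eq_empty {k : ℕ} (hk : n ≤ k) : upperSlice σ k = ∅ :=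
  filter_false_of_mem fun i _ => by omega

theorem upperSlice_inf {x : Fin n → L} (hx : Monotone (x ∘ σ)) (k : ℕ) :
    (upperSlice σ k).inf x = if h : k < n then x (σ ⟨k, h⟩) else ⊤ := by
  split_ifs with h
  · refine le_antisymm (inf_le (by simp [upperSlice])) (Finset.le_inf fun i hi => ?_)
    have hki : (⟨k, h⟩ : Fin n) ≤ σ.symm i := Fin.le_def.2 (mem_filter.1 hi).2
    simpa using hx hki
  · rw [upperSlice_eq_empty (not_lt.1 h), inf_empty]

theorem exists_upperSlice_superset (x : Fin n → L) (hx : Monotone (x ∘ σ)) (I : Finset (Fin n)) :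
    ∃ k : Fin (n + 1), I ⊆ upperSlice σ k ∧ I.inf x ≤ (upperSlice σ k).inf x := by
  rcases I.eq_empty_or_nonempty with rfl | hI
  · exact ⟨Fin.last n, empty_subset _, by rw [Fin.val_last, upperSlice_eq_empty le_rfl]⟩
  obtain ⟨i, hi, hmin⟩ := I.exists_min_image σ.symm hI
  refine ⟨(σ.symm i).castSucc, fun m hm => ?_, ?_⟩
  · simpa [upperSlice] using hmin m hm
  · rw [upperSlice_inf hx, Fin.val_castSucc, dif_pos (σ.symm i).isLt]
    simpa using inf_le hi

end Simplex

/-- the standard-simplex representation of a polynomial function on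
a bounded chain: on the simplex x_{σ(1)} ≤ ... ≤ x_{σ(n)},
f(x) = ⋁_{i ∈ [n+1]} (α_f(S↑_σ(i)) ∧ x_{σ(i)}), with x_{σ(n+1)} = 1, where
α_f(I) = f(e_I) and S↑_σ(i) = {σ(i),...,σ(n)}. Here k : Fin (n+1) represents
i = k+1 ∈ [n+1], and m ∈ S↑_σ(k+1) iff k ≤ σ⁻¹(m). -/
theorem stmt15 {L : Type*} [LinearOrder L] [BoundedOrder L] {n : ℕ}
    (f : (Fin n → L) → L)
    (hf : ∀ x, f x = (Finset.univ : Finset (Fin n)).powerset.sup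
      (fun I => f (fun i => if i ∈ I then ⊤ else ⊥) ⊓ I.inf x))
    (σ : Equiv.Perm (Fin n)) (x : Fin n → L) (hx : Monotone (x ∘ σ)) :
    f x = (Finset.univ : Finset (Fin (n + 1))).sup (fun k =>
      f (fun i => if (k : ℕ) ≤ (σ.symm i : ℕ) then ⊤ else ⊥) ⊓
        (if h : (k : ℕ) < n then x (σ ⟨k, h⟩) else ⊤)) := by
  have hα : Monotone fun I => f (indicatorVec I) := (HasDNF.monotone hf).comp indicatorVec_mono
  simp_rw [← indicatorVec_upperSlice, ← upperSlice_inf hx]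
  rw [hf x]
  apply le_antisymm
  · refine Finset.sup_le fun I _ => ?_
    obtain ⟨k, hIk, hinf⟩ := exists_upperSlice_superset x hx I
    exact le_sup_of_le (mem_univ k) (inf_le_inf (hα hIk) hinf)
  · exact Finset.sup_le fun k _ => le_sup (f := fun I => f (indicatorVec I) ⊓ I.inf x)
      (mem_powerset.2 (subset_univ _))
end

section
/- Let L be a bounded chain. A function f : L^n → L is a discrete Sugeno integral (i.e., a lattice polynomial function with f(0,...,0)=0 and f(1,...,1)=1) if and only if it is nondecreasing, Boolean min homogeneous, and Boolean max homogeneous. -/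
/-!
A Sugeno integral commutes with `· ⊓ c` and `· ⊔ c` applied to all arguments at once, by
distributivity, with `μ ∅ = ⊥` and `μ univ = ⊤` handling the empty and the full coalition.

Conversely, put `μ I := f 𝟙_I`, where `𝟙_I` is the `⊤`/`⊥` indicator of `I`. Each term
`μ I ⊓ ⋀_{i ∈ I} x i` equals `f (𝟙_I ⊓ ⋀_{i ∈ I} x i) ≤ f x`. For the other inequality let `S`
be the integral and `I := {i | S < x i}`; then `x ≤ 𝟙_I ⊔ S`, so `f x ≤ μ I ⊔ S`, and
`μ I ≤ S` because the term of `I` is at most `S` while `⋀_{i ∈ I} x i > S` (here `L` must be a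
chain).
-/

open Finset

section Sugeno

variable {ι L : Type*}

def sugeno [Fintype ι] [Lattice L] [BoundedOrder L] (μ : Finset ι → L) (x : ι → L) : L :=
  univ.powerset.sup fun I => μ I ⊓ I.inf x

section DistribLattice

variable [Fintype ι] [DistribLattice L] [BoundedOrder L]

theorem sugeno_mono (μ : Finset ι → L) : Monotone (sugeno μ) := fun _ _ hxy =>
  sup_mono_fun fun _ _ => inf_le_inf_left _ (inf_mono_fun fun i _ => hxy i)

theorem sugeno_inf_const {μ : Finset ι → L} (hμ : μ ∅ = ⊥) (x : ι → L) (c : L) :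
    sugeno μ (fun i => x i ⊓ c) = sugeno μ x ⊓ c := by
  rw [sugeno, sugeno, sup_inf_distrib_right]
  refine sup_congr rfl fun I _ => ?_
  obtain rfl | hI := I.eq_empty_or_nonempty
  · simp [hμ]
  · rw [show (fun i => x i ⊓ c) = x ⊓ fun _ => c from rfl, inf_inf, inf_const hI, inf_assoc]

theorem sugeno_sup_const {μ : Finset ι → L} (hμ : μ univ = ⊤) (x : ι → L) (c : L) :
    sugeno μ (fun i => x i ⊔ c) = sugeno μ x ⊔ c := by
  have hsup : univ.powerset.sup μ = ⊤ := top_unique (hμ ▸ le_sup (mem_powerset_self univ))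
  calc sugeno μ (fun i => x i ⊔ c)
      = univ.powerset.sup ((fun I => μ I ⊓ I.inf x) ⊔ fun I => μ I ⊓ c) := by
        simp only [sugeno, ← inf_sup_distrib_right, inf_sup_left]
        rfl
    _ = sugeno μ x ⊔ c := by rw [sup_sup, ← sup_inf_distrib_right, hsup, top_inf_eq]; rfl

end DistribLattice

section Indicator

variable [DecidableEq ι]

def boolIndicator [Bot L] [Top L] (I : Finset ι) (i : ι) : L := if i ∈ I then ⊤ else ⊥

theorem boolIndicator_eq_bot_or_eq_top [Bot L] [Top L] (I : Finset ι) (i : ι) :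
    (boolIndicator I i : L) = ⊥ ∨ (boolIndicator I i : L) = ⊤ := by
  unfold boolIndicator
  split_ifs <;> simp

theorem boolIndicator_empty [Bot L] [Top L] : (boolIndicator ∅ : ι → L) = ⊥ := rfl

theorem boolIndicator_univ [Fintype ι] [Bot L] [Top L] : (boolIndicator univ : ι → L) = ⊤ := by
  ext i
  simp [boolIndicator]

theorem boolIndicator_mono [Preorder L] [BoundedOrder L] :
    Monotone (boolIndicator : Finset ι → ι → L) := fun I J hIJ i => by
  unfold boolIndicator
  split_ifs with hI hJ
  exacts [le_rfl, absurd (hIJ hI) hJ, bot_le, le_rfl]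

theorem boolIndicator_inf_inf_le [Lattice L] [BoundedOrder L] (I : Finset ι) (x : ι → L) :
    (fun i => boolIndicator I i ⊓ I.inf x) ≤ x := fun i => by
  dsimp only [boolIndicator]
  split_ifs with hi
  · exact (top_inf_eq _).trans_le (inf_le hi)
  · exact (bot_inf_eq _).trans_le bot_le

theorem le_boolIndicator_sup [Fintype ι] [LinearOrder L] [BoundedOrder L] (x : ι → L) (c : L) :
    x ≤ fun i => boolIndicator {i | c < x i} i ⊔ c := fun i => by
  dsimp only [boolIndicator]
  split_ifs with hi
  · exact le_sup_of_le_left le_top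
  · simpa using hi

end Indicator

section Representation

variable [Fintype ι] [DecidableEq ι] [LinearOrder L] [BoundedOrder L] {f : (ι → L) → L}

theorem sugeno_boolIndicator_le (hmono : Monotone f)
    (hmin : ∀ e : ι → L, (∀ i, e i = ⊥ ∨ e i = ⊤) → ∀ c, f (fun i => e i ⊓ c) = f e ⊓ c)
    (x : ι → L) : sugeno (fun I => f (boolIndicator I)) x ≤ f x :=
  Finset.sup_le fun I _ => by
    rw [← hmin _ (boolIndicator_eq_bot_or_eq_top I)]
    exact hmono (boolIndicator_inf_inf_le I x)

theorem le_sugeno_boolIndicator (hmono : Monotone f)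
    (hmax : ∀ e : ι → L, (∀ i, e i = ⊥ ∨ e i = ⊤) → ∀ c, f (fun i => e i ⊔ c) = f e ⊔ c)
    (x : ι → L) : f x ≤ sugeno (fun I => f (boolIndicator I)) x := by
  set S := sugeno (fun I => f (boolIndicator I)) x
  by_contra! hlt
  set I : Finset ι := {i | S < x i}
  have hinf : S < I.inf x :=
    (Finset.lt_inf_iff (hlt.trans_le le_top)).2 fun i hi => (mem_filter.1 hi).2
  have hterm : f (boolIndicator I) ⊓ I.inf x ≤ S :=
    le_sup (f := fun J : Finset ι => f (boolIndicator J) ⊓ J.inf x)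
      (mem_powerset.2 (subset_univ I))
  have hμI : f (boolIndicator I) ≤ S := (inf_le_iff.1 hterm).resolve_right hinf.not_ge
  have : f x ≤ S :=
    calc f x ≤ f (fun i => boolIndicator I i ⊔ S) := hmono (le_boolIndicator_sup x S)
      _ = f (boolIndicator I) ⊔ S := hmax _ (boolIndicator_eq_bot_or_eq_top I) S
      _ = S := sup_eq_right.2 hμI
  exact this.not_gt hlt

end Representation

end Sugeno

/-- a function on a bounded chain is a discrete Sugeno integral iff
it is nondecreasing, Boolean min homogeneous, and Boolean max homogeneous. -/
theorem stmt16 {L : Type*} [LinearOrder L] [BoundedOrder L] {n : ℕ}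
    (f : (Fin n → L) → L) :
    (∃ μ : Finset (Fin n) → L, (∀ I J, I ⊆ J → μ I ≤ μ J) ∧ μ ∅ = ⊥ ∧
        μ Finset.univ = ⊤ ∧
        ∀ x, f x = (Finset.univ : Finset (Fin n)).powerset.sup
          (fun I => μ I ⊓ I.inf x)) ↔
    (Monotone f ∧
      (∀ e : Fin n → L, (∀ i, e i = ⊥ ∨ e i = ⊤) →
        ∀ c, f (fun i => e i ⊓ c) = f e ⊓ c) ∧
      (∀ e : Fin n → L, (∀ i, e i = ⊥ ∨ e i = ⊤) →
        ∀ c, f (fun i => e i ⊔ c) = f e ⊔ c)) := by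
  constructor
  · rintro ⟨μ, -, hbot, htop, hf⟩
    obtain rfl : f = sugeno μ := funext hf
    exact ⟨sugeno_mono μ, fun e _ => sugeno_inf_const hbot e, fun e _ => sugeno_sup_const htop e⟩
  · rintro ⟨hmono, hmin, hmax⟩
    refine ⟨fun I => f (boolIndicator I), fun I J hIJ => hmono (boolIndicator_mono hIJ), ?_, ?_,
      fun x => (le_sugeno_boolIndicator hmono hmax x).antisymm
        (sugeno_boolIndicator_le hmono hmin x)⟩
    · simpa [boolIndicator_empty, ← Pi.bot_def] using
        hmin _ (boolIndicator_eq_bot_or_eq_top ∅) ⊥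
    · simpa [boolIndicator_univ, ← Pi.top_def] using
        hmax _ (boolIndicator_eq_bot_or_eq_top univ) ⊤
end
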